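/- arXiv:1406.7490 — 14 statements merged into one kernel-verified Lean document; each statement's English description precedes it below -/
import Mathlib

section
/- If u is a vertex of degree 1 in a graph G, then every centroidal locating set of G contains u. -/
open SimpleGraph

/-- A set `B` is a centroidal locating set of `G` if every pair of distinct vertices is
distinguished by the relative distances to two vertices of `B`. -/
def CentroidalLocating {V : Type*} (G : SimpleGraph V) (B : Set V) : Prop :=
  ∀ ⦃x y : V⦄, x ≠ y → ∃ b1 ∈ B, ∃ b2 ∈ B,
    (G.dist x b1 ≤ G.dist x b2 ∧ G.dist y b2 < G.dist y b1) ∨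
    (G.dist y b1 ≤ G.dist y b2 ∧ G.dist x b2 < G.dist x b1)

/-- The centroidal dimension: minimum size of a centroidal locating set. -/
noncomputable def CD {V : Type*} (G : SimpleGraph V) : ℕ :=
  sInf {k | ∃ B : Set V, B.ncard = k ∧ CentroidalLocating G B}

theorem degree_one_mem_centroidal {V : Type*} [Fintype V] (G : SimpleGraph V)
    [DecidableRel G.Adj] (hG : G.Connected) (u : V) (hu : G.degree u = 1)
    (B : Set V) (hB : CentroidalLocating G B) : u ∈ B := by
  rw [degree, Finset.card_eq_one] at hu
  obtain ⟨v, hv⟩ := hu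
  have hadj : G.Adj u v := by
    rw [← mem_neighborFinset, hv]; exact Finset.mem_singleton_self v
  have huniq : ∀ w, G.Adj u w → w = v := by
    intro w hw
    have := (mem_neighborFinset G u w).mpr hw
    rwa [hv, Finset.mem_singleton] at this
  -- key: for b ≠ u, dist u b = dist v b + 1
  have key : ∀ b, b ≠ u → G.dist u b = G.dist v b + 1 := by
    intro b hb
    have hne : G.dist u b ≠ 0 := by
      rw [dist_ne_zero_iff_ne_and_reachable]
      exact ⟨hb.symm, hG.preconnected u b⟩
    obtain ⟨p, hp⟩ := exists_walk_of_dist_ne_zero hne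
    have hle1 : G.dist u b ≤ G.dist v b + 1 := by
      have := hG.dist_triangle (u := u) (v := v) (w := b)
      have h1 : G.dist u v = 1 := dist_eq_one_iff_adj.mpr hadj
      omega
    have hle2 : G.dist v b + 1 ≤ G.dist u b := by
      cases p with
      | nil => exact (hne (by simp)).elim
      | cons h q =>
        have hw := huniq _ h
        have : G.dist v b ≤ q.length := hw ▸ dist_le q
        simp [Walk.length_cons] at hp
        omega
    omega
  by_contra huB
  obtain ⟨b1, hb1, b2, hb2, h⟩ := hB (show u ≠ v from hadj.ne)
  have k1 : G.dist u b1 = G.dist v b1 + 1 := key b1 (fun h => huB (h ▸ hb1))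
  have k2 : G.dist u b2 = G.dist v b2 + 1 := key b2 (fun h => huB (h ▸ hb2))
  omega
end

section
/- If u is a vertex of degree 1 in a graph G and v is its unique neighbour, with v of degree 2, then every centroidal locating set of G contains either v or the neighbour of v other than u. -/
open SimpleGraph

theorem degree_one_two_neighbour {V : Type*} [Fintype V] (G : SimpleGraph V)
    [DecidableRel G.Adj] (hG : G.Connected) (u v : V)
    (hu : G.degree u = 1) (huv : G.Adj u v) (hv : G.degree v = 2)
    (B : Set V) (hB : CentroidalLocating G B) :
    v ∈ B ∨ ∃ w ∈ B, G.Adj v w ∧ w ≠ u := by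
  by_contra hcon
  push_neg at hcon
  obtain ⟨hvB, hnb⟩ := hcon
  -- v is the unique neighbour of u
  have huniq : ∀ w, G.Adj u w → w = v := by
    intro w hw
    have hc : (G.neighborFinset u).card = 1 := by
      rw [G.card_neighborFinset_eq_degree]; exact hu
    obtain ⟨a, ha⟩ := Finset.card_eq_one.mp hc
    have h1 : w ∈ G.neighborFinset u := by simpa using hw
    have h2 : v ∈ G.neighborFinset u := by simpa using huv
    rw [ha] at h1 h2
    simp only [Finset.mem_singleton] at h1 h2
    rw [h1, h2]
  have hne : u ≠ v := huv.ne
  -- key : for b ≠ u, dist u b = dist v b + 1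
  have key : ∀ b, b ≠ u → G.dist u b = G.dist v b + 1 := by
    intro b hb
    apply le_antisymm
    · calc G.dist u b ≤ G.dist u v + G.dist v b := hG.dist_triangle
        _ = G.dist v b + 1 := by rw [dist_eq_one_iff_adj.mpr huv]; omega
    · obtain ⟨p, hp⟩ := hG.exists_walk_length_eq_dist u b
      obtain ⟨w, hadj, q, rfl⟩ := p.exists_eq_cons_of_ne (Ne.symm hb)
      have hwv : w = v := huniq w hadj
      have hdl : G.dist v b ≤ q.length := by rw [← hwv]; exact dist_le q
      simp only [SimpleGraph.Walk.length_cons] at hp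
      omega
  obtain ⟨b1, hb1, b2, hb2, hcase⟩ := hB hne
  have hvb : ∀ b ∈ B, G.dist v b ≠ 0 := by
    intro b hb h0
    exact hvB (hG.dist_eq_zero_iff.mp h0 ▸ hb)
  have hvb1 : ∀ b ∈ B, b ≠ u → G.dist v b ≠ 1 := by
    intro b hb hbu h1
    exact hbu (hnb b hb (dist_eq_one_iff_adj.mp h1))
  rcases eq_or_ne b1 u with h1 | h1 <;> rcases eq_or_ne b2 u with h2 | h2
  · rw [h1, h2] at hcase; simp only [SimpleGraph.dist_self] at hcase; omega
  · rw [h1] at hcase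
    have k2 := key b2 h2
    have d1 : G.dist v u = 1 := dist_eq_one_iff_adj.mpr huv.symm
    have := hvb b2 hb2
    have := hvb1 b2 hb2 h2
    simp only [SimpleGraph.dist_self, d1] at hcase
    omega
  · rw [h2] at hcase
    have k1 := key b1 h1
    have d2 : G.dist v u = 1 := dist_eq_one_iff_adj.mpr huv.symm
    have := hvb b1 hb1
    have := hvb1 b1 hb1 h1
    simp only [SimpleGraph.dist_self, d2] at hcase
    omega
  · have k1 := key b1 h1
    have k2 := key b2 h2
    omega
end

section
/- Let S be a set of vertices of a graph G such that every u ∈ S has at least two neighbours outside S, and distinct vertices of S have distinct neighbourhoods outside S (i.e., N(u)\S ≠ N(v)\S for u ≠ v in S). Then V(G)\S is a centroidal locating set of G. -/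
open SimpleGraph

private lemma aux_mixed {V : Type*} [Fintype V]
    (G : SimpleGraph V) (hG : G.Connected) (S : Set V)
    (hdeg : ∀ u ∈ S, 2 ≤ (G.neighborSet u \ S).ncard)
    {x y : V} (hxy : x ≠ y) (hx : x ∈ S) (hy : y ∉ S) :
    ∃ b1 ∈ Sᶜ, ∃ b2 ∈ Sᶜ, G.dist x b1 ≤ G.dist x b2 ∧ G.dist y b2 < G.dist y b1 := by
  obtain ⟨b, hb, hby⟩ := Set.exists_ne_of_one_lt_ncard (lt_of_lt_of_le one_lt_two (hdeg x hx)) y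
  obtain ⟨hbadj, hbS⟩ := hb
  refine ⟨b, hbS, y, hy, ?_, ?_⟩
  · rw [(G.dist_eq_one_iff_adj).mpr hbadj]
    exact hG.pos_dist_of_ne hxy
  · rw [SimpleGraph.dist_self]
    exact hG.pos_dist_of_ne (Ne.symm hby)

private lemma aux_both {V : Type*} [Fintype V]
    (G : SimpleGraph V) (hG : G.Connected) (S : Set V)
    (hdeg : ∀ u ∈ S, 2 ≤ (G.neighborSet u \ S).ncard)
    {x y b : V} (hx : x ∈ S) (hy : y ∈ S)
    (hb : b ∈ G.neighborSet x \ S) (hb' : b ∉ G.neighborSet y \ S) :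
    ∃ b1 ∈ Sᶜ, ∃ b2 ∈ Sᶜ, G.dist x b1 ≤ G.dist x b2 ∧ G.dist y b2 < G.dist y b1 := by
  obtain ⟨hbadj, hbS⟩ := hb
  have hbny : ¬ G.Adj y b := fun h => hb' ⟨h, hbS⟩
  obtain ⟨c, hc, -⟩ := Set.exists_ne_of_one_lt_ncard (lt_of_lt_of_le one_lt_two (hdeg y hy)) y
  obtain ⟨hcadj, hcS⟩ := hc
  refine ⟨b, hbS, c, hcS, ?_, ?_⟩
  · rw [(G.dist_eq_one_iff_adj).mpr hbadj]
    exact hG.pos_dist_of_ne (fun h => hcS (h ▸ hx))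
  · rw [(G.dist_eq_one_iff_adj).mpr hcadj]
    have h0 : G.dist y b ≠ 0 := by
      have := hG.pos_dist_of_ne (show y ≠ b from fun h => hbS (h ▸ hy))
      omega
    have h1 : G.dist y b ≠ 1 := fun h => hbny ((G.dist_eq_one_iff_adj).mp h)
    omega

theorem compl_centroidal_of_two_outside_neighbours {V : Type*} [Fintype V]
    (G : SimpleGraph V) (hG : G.Connected) (S : Set V)
    (hdeg : ∀ u ∈ S, 2 ≤ (G.neighborSet u \ S).ncard)
    (hinj : ∀ u ∈ S, ∀ v ∈ S, u ≠ v → G.neighborSet u \ S ≠ G.neighborSet v \ S) :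
    CentroidalLocating G Sᶜ := by
  intro x y hxy
  by_cases hx : x ∈ S <;> by_cases hy : y ∈ S
  · -- both in S
    have hne := hinj x hx y hy hxy
    rw [Ne, Set.ext_iff] at hne
    push_neg at hne
    obtain ⟨b, hb⟩ := hne
    rcases hb with ⟨h1, h2⟩ | ⟨h1, h2⟩
    · obtain ⟨b1, m1, b2, m2, h⟩ := aux_both G hG S hdeg hx hy h1 h2
      exact ⟨b1, m1, b2, m2, Or.inl h⟩
    · obtain ⟨b1, m1, b2, m2, h⟩ := aux_both G hG S hdeg hy hx h2 h1
      exact ⟨b1, m1, b2, m2, Or.inr h⟩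
  · obtain ⟨b1, m1, b2, m2, h⟩ := aux_mixed G hG S hdeg hxy hx hy
    exact ⟨b1, m1, b2, m2, Or.inl h⟩
  · obtain ⟨b1, m1, b2, m2, h⟩ := aux_mixed G hG S hdeg (Ne.symm hxy) hy hx
    exact ⟨b1, m1, b2, m2, Or.inr h⟩
  · refine ⟨x, hx, y, hy, Or.inl ⟨?_, ?_⟩⟩
    · rw [SimpleGraph.dist_self]; exact Nat.zero_le _
    · rw [SimpleGraph.dist_self]; exact hG.pos_dist_of_ne (Ne.symm hxy)
end

section
/- For any vertex u of degree at least 2 in a graph G, the set V(G)\{u} is a centroidal locating set of G. Consequently, every connected graph on n vertices with maximum degree at least 2 satisfies CD(G) ≤ n − 1. -/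
open SimpleGraph

lemma centroidal_compl_singleton {V : Type*} [Fintype V]
    (G : SimpleGraph V) [DecidableRel G.Adj] (hG : G.Connected)
    (u : V) (hu : 2 ≤ G.degree u) : CentroidalLocating G {u}ᶜ := by
  -- helper: for v ≠ u, distinguish u from v using vertices ≠ u
  classical
  have key : ∀ v : V, v ≠ u → ∃ b1 : V, b1 ≠ u ∧ ∃ b2 : V, b2 ≠ u ∧
      ((G.dist u b1 ≤ G.dist u b2 ∧ G.dist v b2 < G.dist v b1) ∨
      (G.dist v b1 ≤ G.dist v b2 ∧ G.dist u b2 < G.dist u b1)) := by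
    intro v hv
    by_cases hadj : G.Adj u v
    · -- pick another neighbor w of u, w ≠ v
      have : ∃ w, G.Adj u w ∧ w ≠ v := by
        by_contra h
        push_neg at h
        have hsub : G.neighborFinset u ⊆ {v} := by
          intro w hw
          rw [mem_neighborFinset] at hw
          simp [h w hw]
        have h2 := Finset.card_le_card hsub
        have h3 : G.degree u ≤ 1 := by
          rw [← card_neighborFinset_eq_degree]
          simpa using h2
        omega
      obtain ⟨w, hw, hwv⟩ := this
      refine ⟨w, (G.ne_of_adj hw).symm, v, hv, Or.inl ⟨?_, ?_⟩⟩
      · rw [(dist_eq_one_iff_adj).mpr hw, (dist_eq_one_iff_adj).mpr hadj]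
      · rw [SimpleGraph.dist_self]
        exact hG.pos_dist_of_ne (Ne.symm hwv)
    · -- dist u v ≥ 2 ; take neighbor w of u
      have hduv : 2 ≤ G.dist u v := by
        have h1 : G.dist u v ≠ 1 := fun h => hadj (dist_eq_one_iff_adj.mp h)
        have h0 : 0 < G.dist u v := hG.pos_dist_of_ne (Ne.symm hv)
        omega
      obtain ⟨w, hw⟩ : ∃ w, G.Adj u w := by
        rw [← card_neighborFinset_eq_degree] at hu
        have : (G.neighborFinset u).Nonempty := Finset.card_pos.mp (by omega)
        obtain ⟨w, hw⟩ := this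
        exact ⟨w, (mem_neighborFinset G u w).mp hw⟩
      refine ⟨v, hv, w, (G.ne_of_adj hw).symm, Or.inr ⟨?_, ?_⟩⟩
      · rw [SimpleGraph.dist_self]; exact Nat.zero_le _
      · rw [(dist_eq_one_iff_adj).mpr hw]
        have : 0 < G.dist u v := hG.pos_dist_of_ne (Ne.symm hv)
        omega
  intro x y hxy
  by_cases hx : x = u
  · subst hx
    obtain ⟨b1, hb1, b2, hb2, h⟩ := key y (Ne.symm hxy)
    exact ⟨b1, hb1, b2, hb2, h⟩
  · by_cases hy : y = u
    · subst hy
      obtain ⟨b1, hb1, b2, hb2, h⟩ := key x hxy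
      refine ⟨b1, hb1, b2, hb2, ?_⟩
      tauto
    · refine ⟨x, hx, y, hy, Or.inl ⟨?_, ?_⟩⟩
      · rw [SimpleGraph.dist_self]; exact Nat.zero_le _
      · rw [SimpleGraph.dist_self]; exact hG.pos_dist_of_ne (Ne.symm hxy)

theorem compl_singleton_centroidal_and_CD_le {V : Type*} [Fintype V]
    (G : SimpleGraph V) [DecidableRel G.Adj] (hG : G.Connected) :
    (∀ u : V, 2 ≤ G.degree u → CentroidalLocating G {u}ᶜ) ∧
    (2 ≤ G.maxDegree → CD G ≤ Fintype.card V - 1) := by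
  refine ⟨fun u hu => centroidal_compl_singleton G hG u hu, fun hmax => ?_⟩
  have hne : Nonempty V := hG.nonempty
  obtain ⟨u, hu⟩ := G.exists_maximal_degree_vertex
  have hdeg : 2 ≤ G.degree u := hu ▸ hmax
  classical
  have hcard : ({u}ᶜ : Set V).ncard = Fintype.card V - 1 := by
    rw [Set.ncard_eq_toFinset_card', Set.toFinset_compl, Set.toFinset_singleton,
      Finset.card_compl, Finset.card_singleton]
  exact Nat.sInf_le ⟨{u}ᶜ, hcard, centroidal_compl_singleton G hG u hdeg⟩
end

section
/- Let G be a graph on n vertices of diameter 2 with centroidal dimension CD(G) = k ≥ 1. Then n ≤ 2^k + k − 1. -/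
/-!
Let `B` be a centroidal locating set of size `k`. In a graph of diameter 2 a vertex `x ∉ B` lies
at distance 1 or 2 from each vertex of `B`, so the ordering of `B` by distance to `x` is
determined by the trace `N(x) ∩ B`: `b₁` is at most as far as `b₂` iff `b₂ ∈ N(x) → b₁ ∈ N(x)`.
Hence the trace map is injective on `V \ B`, and its image cannot contain both `∅` and `B`,
since both give the partition of `B` into a single class. So `|V \ B| ≤ 2 ^ k - 1`.
-/

open SimpleGraph

open Finset in
theorem Finset.card_le_two_pow_card_sub_one {α : Type*} [DecidableEq α] {s : Finset α}
    {𝒜 : Finset (Finset α)} (h𝒜 : 𝒜 ⊆ s.powerset) (h : ¬(∅ ∈ 𝒜 ∧ s ∈ 𝒜)) :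
    #𝒜 ≤ 2 ^ #s - 1 := by
  by_cases hempty : ∅ ∈ 𝒜
  · have : 𝒜 ⊆ s.powerset.erase s := fun t ht ↦
      mem_erase.2 ⟨fun hts ↦ h ⟨hempty, hts ▸ ht⟩, h𝒜 ht⟩
    simpa [card_erase_of_mem (mem_powerset_self s)] using card_le_card this
  · have : 𝒜 ⊆ s.powerset.erase ∅ := fun t ht ↦
      mem_erase.2 ⟨fun ht0 ↦ hempty (ht0 ▸ ht), h𝒜 ht⟩
    simpa [card_erase_of_mem (empty_mem_powerset s)] using card_le_card this

namespace SimpleGraph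

variable {V : Type*} {G : SimpleGraph V}

theorem dist_eq_one_or_two_of_diam_eq_two (hdiam : G.diam = 2) {u v : V} (huv : u ≠ v) :
    G.dist u v = 1 ∨ G.dist u v = 2 := by
  have hfin : G.ediam ≠ ⊤ := ediam_ne_top_of_diam_ne_zero (by omega)
  have hpos : 0 < G.dist u v := (preconnected_of_ediam_ne_top hfin u v).pos_dist_of_ne huv
  have hle : G.dist u v ≤ 2 := hdiam ▸ dist_le_diam hfin
  omega

theorem dist_le_dist_iff_of_diam_eq_two (hdiam : G.diam = 2) {x b₁ b₂ : V} (h₁ : x ≠ b₁)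
    (h₂ : x ≠ b₂) : G.dist x b₁ ≤ G.dist x b₂ ↔ (G.Adj x b₂ → G.Adj x b₁) := by
  rw [← dist_eq_one_iff_adj, ← dist_eq_one_iff_adj]
  have := dist_eq_one_or_two_of_diam_eq_two hdiam h₁
  have := dist_eq_one_or_two_of_diam_eq_two hdiam h₂
  omega

theorem exists_finset_centroidalLocating_card_eq_CD [Finite V] (h : CD G ≠ 0) :
    ∃ B : Finset V, B.card = CD G ∧ CentroidalLocating G B := by
  obtain ⟨B, hcard, hB⟩ := Nat.sInf_mem (Nat.nonempty_of_pos_sInf (Nat.pos_of_ne_zero h))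
  obtain ⟨B, rfl⟩ := B.toFinite.exists_finset_coe
  exact ⟨B, by rwa [Set.ncard_coe_finset] at hcard, hB⟩

end SimpleGraph

namespace CentroidalLocating

open Finset

variable {V : Type*} {G : SimpleGraph V}

theorem eq_of_forall_dist_le_iff {B : Set V} (hB : CentroidalLocating G B) {x y : V}
    (h : ∀ b₁ ∈ B, ∀ b₂ ∈ B, G.dist x b₁ ≤ G.dist x b₂ ↔ G.dist y b₁ ≤ G.dist y b₂) :
    x = y := by
  by_contra hxy
  obtain ⟨b₁, hb₁, b₂, hb₂, hlt | hlt⟩ := hB hxy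
  · have := (h b₁ hb₁ b₂ hb₂).1 hlt.1
    omega
  · have := (h b₁ hb₁ b₂ hb₂).2 hlt.1
    omega

variable [DecidableRel G.Adj] {B : Finset V}

theorem eq_of_diam_eq_two (hB : CentroidalLocating G B) (hdiam : G.diam = 2) {x y : V}
    (hx : x ∉ B) (hy : y ∉ B)
    (h : {b ∈ B | G.Adj x b} = {b ∈ B | G.Adj y b} ∨
      ({b ∈ B | G.Adj x b} = ∅ ∧ {b ∈ B | G.Adj y b} = B)) : x = y := by
  refine hB.eq_of_forall_dist_le_iff fun b₁ hb₁ b₂ hb₂ ↦ ?_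
  have hne : ∀ z ∉ B, ∀ b ∈ B, z ≠ b := fun z hz b hb hzb ↦ hz (hzb ▸ hb)
  rw [dist_le_dist_iff_of_diam_eq_two hdiam (hne x hx b₁ hb₁) (hne x hx b₂ hb₂),
    dist_le_dist_iff_of_diam_eq_two hdiam (hne y hy b₁ hb₁) (hne y hy b₂ hb₂)]
  have mem_trace : ∀ z, ∀ b ∈ B, b ∈ ({b ∈ B | G.Adj z b} : Finset V) ↔ G.Adj z b :=
    fun z b hb ↦ by simp only [mem_filter, hb, true_and]
  rcases h with h | ⟨hx0, hyB⟩
  · rw [← mem_trace x b₁ hb₁, ← mem_trace x b₂ hb₂, h, mem_trace y b₁ hb₁, mem_trace y b₂ hb₂]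
  · have hx₂ : ¬G.Adj x b₂ := fun hadj ↦ by simpa [hx0] using (mem_trace x b₂ hb₂).2 hadj
    have hy₁ : G.Adj y b₁ := (mem_trace y b₁ hb₁).1 (by rw [hyB]; exact hb₁)
    tauto

theorem card_compl_le_of_diam_eq_two [Fintype V] [DecidableEq V] (hB : CentroidalLocating G B)
    (hdiam : G.diam = 2) (hBne : B.Nonempty) : #Bᶜ ≤ 2 ^ #B - 1 := by
  set trace : V → Finset V := fun x ↦ {b ∈ B | G.Adj x b}
  have hinj : Set.InjOn trace ↑Bᶜ := fun x hx y hy hxy ↦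
    hB.eq_of_diam_eq_two hdiam (by simpa using hx) (by simpa using hy) (.inl hxy)
  rw [← card_image_of_injOn hinj]
  refine card_le_two_pow_card_sub_one (fun t ht ↦ ?_) ?_
  · obtain ⟨x, -, rfl⟩ := mem_image.1 ht
    exact mem_powerset.2 (filter_subset _ _)
  · rintro ⟨hempty, hfull⟩
    obtain ⟨x, hx, hx0⟩ := mem_image.1 hempty
    obtain ⟨y, hy, hyB⟩ := mem_image.1 hfull
    obtain rfl : x = y :=
      hB.eq_of_diam_eq_two hdiam (by simpa using hx) (by simpa using hy) (.inr ⟨hx0, hyB⟩)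
    exact hBne.ne_empty (hyB.symm.trans hx0)

end CentroidalLocating

theorem card_le_of_diam_two_general {V : Type*} [Fintype V] (G : SimpleGraph V)
    (hdiam : G.diam = 2) (k : ℕ) (hk : CD G = k) (hk1 : 1 ≤ k) :
    Fintype.card V ≤ 2 ^ k + k - 1 := by
  classical
  obtain ⟨B, hcard, hB⟩ := exists_finset_centroidalLocating_card_eq_CD (G := G) (by omega)
  have hBne : B.Nonempty := Finset.card_pos.1 (by omega)
  have hcompl := hB.card_compl_le_of_diam_eq_two hdiam hBne
  have hsplit := Finset.card_add_card_compl B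
  have := Nat.one_le_two_pow (n := k)
  rw [hcard, hk] at hcompl hsplit
  omega

theorem card_le_of_diam_two {V : Type*} [Fintype V] (G : SimpleGraph V)
    (hG : G.Connected) (hdiam : G.diam = 2) (k : ℕ) (hk : CD G = k) (hk1 : 1 ≤ k) :
    Fintype.card V ≤ 2 ^ k + k - 1 :=
  card_le_of_diam_two_general G hdiam k hk hk1
end

section
/- Let G be a graph on n vertices of diameter 3 with centroidal dimension CD(G) = k ≥ 5. Then n ≤ 3^k − 2^{k+1} + 2. -/
/-!
Fix a centroidal locating set `B` with `|B| = k`. As distances are at most `3`, the ordered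
partition of `B` by distance from a vertex `y` has at most four classes, and if it has four then
the first one is `{y}`, so `y ∈ B`, and some `b₁ ∈ B` is adjacent to `y`. Code `y` by a map
`B → Fin 3`: the index of the class of each `b` if there are at most three classes, and otherwise
`0` at `y`, `1` at distance `3` and `2` elsewhere. Each code takes the value `0`, and takes `1` if
it takes `2`; there are `3^k - 2^k - (2^k - 2)` such maps. The codes are distinct: a four-class
vertex `x` sharing its code with a vertex `y` with fewer classes would give
`d(y, x) < d(y, b₃) < d(y, b₁) ≤ d(y, x) + 1`.
-/

open SimpleGraph

open Finset

section DenseRank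

variable {β α : Type*} [Fintype β] [LinearOrder α] (f : β → α)

def denseRank (b : β) : ℕ :=
  #{a ∈ univ.image f | a < f b}

theorem denseRank_lt_denseRank {b c : β} (h : f b < f c) : denseRank f b < denseRank f c := by
  refine card_lt_card ⟨monotone_filter_right _ fun _ _ ha => ha.trans h, fun hsub => ?_⟩
  have hb : f b ∈ {a ∈ univ.image f | a < f c} := by simp [h]
  exact lt_irrefl _ (mem_filter.1 (hsub hb)).2

theorem denseRank_le_denseRank_iff {b c : β} : denseRank f b ≤ denseRank f c ↔ f b ≤ f c :=
  ⟨fun h => not_lt.1 fun h' => (denseRank_lt_denseRank f h').not_ge h,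
    fun h => card_le_card (monotone_filter_right _ fun _ _ ha => ha.trans_le h)⟩

theorem denseRank_lt_denseRank_iff {b c : β} : denseRank f b < denseRank f c ↔ f b < f c := by
  simpa only [not_le] using (denseRank_le_denseRank_iff f (b := c) (c := b)).not

theorem exists_denseRank_add_one_eq {b : β} (h : 0 < denseRank f b) :
    ∃ c, denseRank f c + 1 = denseRank f b := by
  obtain ⟨a, ha, hmax⟩ := exists_max_image _ id (card_pos.1 h)
  obtain ⟨⟨c, rfl⟩, hcb⟩ : (∃ c, f c = a) ∧ a < f b := by simpa using ha
  refine ⟨c, ?_⟩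
  have : {a ∈ univ.image f | a < f c} = {a ∈ univ.image f | a < f b}.erase (f c) := by
    ext a
    simp only [mem_erase, mem_filter]
    constructor
    · rintro ⟨ha, hac⟩
      exact ⟨hac.ne, ha, hac.trans hcb⟩
    · rintro ⟨hac, ha, hab⟩
      exact ⟨ha, lt_of_le_of_ne (hmax a (mem_filter.2 ⟨ha, hab⟩)) hac⟩
  rw [denseRank, this, card_erase_add_one ha, denseRank]

theorem exists_denseRank_eq_of_lt {b : β} {m : ℕ} (h : m < denseRank f b) :
    ∃ c, denseRank f c = m := by
  obtain ⟨d, hd⟩ := Nat.exists_eq_add_of_lt h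
  induction d generalizing b with
  | zero =>
    obtain ⟨c, hc⟩ := exists_denseRank_add_one_eq f (b := b) (by omega)
    exact ⟨c, by omega⟩
  | succ d ih =>
    obtain ⟨c, hc⟩ := exists_denseRank_add_one_eq f (b := b) (by omega)
    exact ih (b := c) (by omega) (by omega)

theorem denseRank_le_self (f : β → ℕ) (b : β) : denseRank f b ≤ f b := by
  simpa [denseRank] using card_le_card (s := {a ∈ univ.image f | a < f b}) (t := range (f b))
    fun a ha => mem_range.2 (mem_filter.1 ha).2

theorem exists_eq_of_denseRank_eq_self (f : β → ℕ) {b : β} (h : denseRank f b = f b) {v : ℕ}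
    (hv : v < f b) : ∃ c, f c = v := by
  have hsub : {a ∈ univ.image f | a < f b} ⊆ range (f b) :=
    fun a ha => mem_range.2 (mem_filter.1 ha).2
  have heq := eq_of_subset_of_card_le hsub (by rw [card_range]; exact h.ge)
  have hv' : v ∈ {a ∈ univ.image f | a < f b} := heq ▸ mem_range.2 hv
  simpa using (mem_filter.1 hv').1

end DenseRank

section Patterns

variable (β : Type*) [Fintype β] [DecidableEq β]

/-- Ordered partitions of `β` into at most three classes, as the functions `β → Fin 3` whose
range is an initial segment of `Fin 3`. -/
def initialPatterns : Finset (β → Fin 3) :=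
  {g | (∃ b, g b = 0) ∧ ((∃ b, g b = 2) → ∃ b, g b = 1)}

variable {β}

theorem card_filter_forall_ne (v : Fin 3) :
    #{g : β → Fin 3 | ∀ b, g b ≠ v} = 2 ^ Fintype.card β := by
  have : ({g | ∀ b, g b ≠ v} : Finset (β → Fin 3)) = Fintype.piFinset fun _ => univ.erase v := by
    ext g
    simp
  rw [this, Fintype.card_piFinset, prod_const, card_erase_of_mem (mem_univ v), card_univ,
    Fintype.card_fin, card_univ]

theorem card_initialPatterns_add_le :
    #(initialPatterns β) + 2 ^ (Fintype.card β + 1) ≤ 3 ^ Fintype.card β + 2 := by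
  set noZero : Finset (β → Fin 3) := {g | ∀ b, g b ≠ 0}
  set noOne : Finset (β → Fin 3) := {g | ∀ b, g b ≠ 1}
  set gap : Finset (β → Fin 3) := {g | (∀ b, g b ≠ 1) ∧ (∃ b, g b = 0) ∧ ∃ b, g b = 2}
  have hdisj : #(initialPatterns β) + #noZero + #gap ≤ 3 ^ Fintype.card β := by
    rw [← card_union_of_disjoint, ← card_union_of_disjoint]
    · simpa using card_le_univ (initialPatterns β ∪ noZero ∪ gap)
    · simp only [initialPatterns, noZero, gap, disjoint_union_left, disjoint_filter]
      grind
    · simp only [initialPatterns, noZero, disjoint_filter]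
      grind
  have hnoOne : noOne ⊆ gap ∪ {fun _ => 0, fun _ => 2} := by
    intro g hg
    simp only [noOne, gap, mem_union, mem_filter, mem_univ, true_and, mem_insert,
      mem_singleton] at hg ⊢
    by_cases h0 : ∃ b, g b = 0
    · by_cases h2 : ∃ b, g b = 2
      · exact .inl ⟨hg, h0, h2⟩
      · refine .inr (.inl (funext fun b => ?_))
        grind
    · refine .inr (.inr (funext fun b => ?_))
      grind
  have hgap : #noOne ≤ #gap + 2 := (card_le_card hnoOne).trans ((card_union_le _ _).trans
    (Nat.add_le_add_left card_le_two _))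
  rw [card_filter_forall_ne] at hdisj hgap
  rw [pow_succ]
  omega

end Patterns

namespace SimpleGraph

variable {V : Type*} (G : SimpleGraph V)

theorem Connected.centroidalLocating_univ (hG : G.Connected) : CentroidalLocating G Set.univ :=
  fun x y hxy => ⟨x, trivial, y, trivial, .inl ⟨by simp, by simpa using hG.pos_dist_of_ne hxy.symm⟩⟩

theorem Connected.exists_centroidalLocating_ncard_eq_CD (hG : G.Connected) :
    ∃ B : Set V, B.ncard = CD G ∧ CentroidalLocating G B :=
  Nat.sInf_mem (s := {k | ∃ B : Set V, B.ncard = k ∧ CentroidalLocating G B})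
    ⟨_, Set.univ, rfl, hG.centroidalLocating_univ⟩

variable (B : Set V) [Fintype B]

/-- `G.distRank B y` encodes the ordered partition of `B` by distance from `y`: it sends `b` to
the index of its class. -/
noncomputable def distRank (y : V) : B → ℕ :=
  denseRank fun b : B => G.dist y b

variable {G B}

theorem distRank_le_distRank_iff {y : V} {b c : B} :
    G.distRank B y b ≤ G.distRank B y c ↔ G.dist y b ≤ G.dist y c :=
  denseRank_le_denseRank_iff _

theorem distRank_lt_distRank_iff {y : V} {b c : B} :
    G.distRank B y b < G.distRank B y c ↔ G.dist y b < G.dist y c :=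
  denseRank_lt_denseRank_iff _

end SimpleGraph

section CentroidalLocating

variable {V : Type*} {G : SimpleGraph V} {B : Set V}

theorem CentroidalLocating.nonempty [Nontrivial V] (hB : CentroidalLocating G B) : B.Nonempty := by
  obtain ⟨x, y, hxy⟩ := exists_pair_ne V
  obtain ⟨b, hb, -⟩ := hB hxy
  exact ⟨b, hb⟩

theorem CentroidalLocating.distRank_injective [Fintype B] (hB : CentroidalLocating G B) :
    Function.Injective (G.distRank B) := by
  intro x y hxy
  by_contra hne
  have key : ∀ b₁ b₂ : B, G.dist x b₁ ≤ G.dist x b₂ ↔ G.dist y b₁ ≤ G.dist y b₂ := fun b₁ b₂ => by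
    rw [← distRank_le_distRank_iff, ← distRank_le_distRank_iff, hxy]
  obtain ⟨b₁, hb₁, b₂, hb₂, ⟨h₁, h₂⟩ | ⟨h₁, h₂⟩⟩ := hB hne
  · exact h₂.not_ge ((key ⟨b₁, hb₁⟩ ⟨b₂, hb₂⟩).1 h₁)
  · exact h₂.not_ge ((key ⟨b₁, hb₁⟩ ⟨b₂, hb₂⟩).2 h₁)

end CentroidalLocating

namespace SimpleGraph

variable {V : Type*} {G : SimpleGraph V} {B : Set V} [Fintype B] {y : V} {b : B}

theorem dist_eq_three_of_distRank_eq_three (h3 : ∀ x y, G.dist x y ≤ 3)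
    (h : G.distRank B y b = 3) : G.dist y b = 3 :=
  le_antisymm (h3 _ _) (h ▸ denseRank_le_self _ b)

theorem exists_dist_eq_of_distRank_eq_three (h3 : ∀ x y, G.dist x y ≤ 3)
    (h : G.distRank B y b = 3) {v : ℕ} (hv : v < 3) : ∃ c : B, G.dist y c = v := by
  have hd := dist_eq_three_of_distRank_eq_three h3 h
  exact exists_eq_of_denseRank_eq_self _ (h.trans hd.symm) (hd ▸ hv)

theorem mem_of_distRank_eq_three (hG : G.Connected) (h3 : ∀ x y, G.dist x y ≤ 3)
    (h : G.distRank B y b = 3) : y ∈ B := by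
  obtain ⟨c, hc⟩ := exists_dist_eq_of_distRank_eq_three h3 h (v := 0) (by norm_num)
  exact hG.dist_eq_zero_iff.1 hc ▸ c.2

variable (G B) in
open Classical in
noncomputable def centroidalCode (y : V) : B → Fin 3 :=
  if ∃ b, G.distRank B y b = 3 then
    fun b => if (b : V) = y then 0 else if G.dist y b = 3 then 1 else 2
  else fun b => ⟨min (G.distRank B y b) 2, by omega⟩

theorem centroidalCode_eq_zero_iff (hy : ∃ b, G.distRank B y b = 3) {b : B} :
    G.centroidalCode B y b = 0 ↔ (b : V) = y := by
  simp only [centroidalCode, if_pos hy]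
  split_ifs <;> simp_all

theorem val_centroidalCode (h3 : ∀ x y, G.dist x y ≤ 3) (hy : ¬∃ b, G.distRank B y b = 3)
    (b : B) : (G.centroidalCode B y b : ℕ) = G.distRank B y b := by
  have : G.distRank B y b ≤ G.dist y b := denseRank_le_self _ b
  have := h3 y b
  have := not_exists.1 hy b
  simp only [centroidalCode, if_neg hy]
  omega

theorem centroidalCode_ne (hG : G.Connected) (h3 : ∀ x y, G.dist x y ≤ 3) {x y : V}
    (hx : ∃ b, G.distRank B x b = 3) (hy : ¬∃ b, G.distRank B y b = 3) :
    G.centroidalCode B x ≠ G.centroidalCode B y := by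
  intro hxy
  have ⟨b₃, hb₃⟩ := hx
  have hd₃ := dist_eq_three_of_distRank_eq_three h3 hb₃
  have hxB := mem_of_distRank_eq_three hG h3 hb₃
  obtain ⟨b₁, hd₁⟩ := exists_dist_eq_of_distRank_eq_three h3 hb₃ (v := 1) (by norm_num)
  have hval (b : B) : (G.centroidalCode B x b : ℕ) = G.distRank B y b := by
    rw [hxy, val_centroidalCode h3 hy]
  have ne_x {b : B} (h : G.dist x b ≠ 0) : (b : V) ≠ x := fun e => h (e ▸ dist_self)
  have h₀ : G.distRank B y ⟨x, hxB⟩ = 0 := by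
    rw [← hval]; simp [centroidalCode, hx]
  have h₃ : G.distRank B y b₃ = 1 := by
    rw [← hval]; simp [centroidalCode, hx, hd₃, ne_x (b := b₃) (by omega)]
  have h₁ : G.distRank B y b₁ = 2 := by
    rw [← hval]; simp [centroidalCode, hx, hd₁, ne_x (b := b₁) (by omega)]
  have hlt₁ : G.dist y x < G.dist y b₃ := (distRank_lt_distRank_iff (b := ⟨x, hxB⟩)).1 (by omega)
  have hlt₂ : G.dist y b₃ < G.dist y b₁ := distRank_lt_distRank_iff.1 (by omega)
  have := hG.dist_triangle (u := y) (v := x) (w := b₁)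
  omega

theorem centroidalCode_injective (hG : G.Connected) (h3 : ∀ x y, G.dist x y ≤ 3)
    (hB : CentroidalLocating G B) : Function.Injective (G.centroidalCode B) := by
  intro x y hxy
  by_cases hx : ∃ b, G.distRank B x b = 3 <;> by_cases hy : ∃ b, G.distRank B y b = 3
  · have hxB := mem_of_distRank_eq_three hG h3 hx.choose_spec
    exact ((centroidalCode_eq_zero_iff hy (b := ⟨x, hxB⟩)).1
      (hxy ▸ (centroidalCode_eq_zero_iff hx).2 rfl))
  · exact absurd hxy (centroidalCode_ne hG h3 hx hy)
  · exact absurd hxy.symm (centroidalCode_ne hG h3 hy hx)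
  · refine hB.distRank_injective (funext fun b => ?_)
    rw [← val_centroidalCode h3 hx, ← val_centroidalCode h3 hy, hxy]

theorem centroidalCode_mem_initialPatterns [DecidableEq B] [Nonempty B] (hG : G.Connected)
    (h3 : ∀ x y, G.dist x y ≤ 3) (y : V) : G.centroidalCode B y ∈ initialPatterns B := by
  simp only [initialPatterns, mem_filter, mem_univ, true_and]
  by_cases hy : ∃ b, G.distRank B y b = 3
  · have ⟨b₃, hb₃⟩ := hy
    have hd₃ := dist_eq_three_of_distRank_eq_three h3 hb₃
    have hb₃y : (b₃ : V) ≠ y := fun e => by simp [e] at hd₃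
    refine ⟨⟨⟨y, mem_of_distRank_eq_three hG h3 hb₃⟩, (centroidalCode_eq_zero_iff hy).2 rfl⟩,
      fun _ => ⟨b₃, ?_⟩⟩
    simp [centroidalCode, hy, hd₃, hb₃y]
  · have hval := val_centroidalCode h3 hy
    obtain ⟨b⟩ := ‹Nonempty B›
    refine ⟨?_, fun ⟨b₂, hb₂⟩ => ?_⟩
    · obtain ⟨c, hc⟩ : ∃ c, G.distRank B y c = 0 :=
        (Nat.eq_zero_or_pos _).elim (⟨b, ·⟩) (exists_denseRank_eq_of_lt _)
      exact ⟨c, Fin.ext (by rw [hval, hc]; rfl)⟩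
    · have h₂ : G.distRank B y b₂ = 2 := by rw [← hval, hb₂]; rfl
      obtain ⟨c, hc⟩ : ∃ c, G.distRank B y c = 1 := exists_denseRank_eq_of_lt _ (b := b₂) (by
        change 1 < G.distRank B y b₂; omega)
      exact ⟨c, Fin.ext (by rw [hval]; exact hc)⟩

end SimpleGraph

theorem card_le_of_diam_three_general {V : Type*} [Fintype V] (G : SimpleGraph V)
    (hG : G.Connected) (hdiam : G.diam = 3) (k : ℕ) (hk : CD G = k) :
    Fintype.card V ≤ 3 ^ k - 2 ^ (k + 1) + 2 := by
  classical
  obtain ⟨B, hBk, hB⟩ := hG.exists_centroidalLocating_ncard_eq_CD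
  have h3 (x y : V) : G.dist x y ≤ 3 :=
    hdiam ▸ G.dist_le_diam (G.ediam_ne_top_of_diam_ne_zero (by omega))
  have : Nontrivial V := G.nontrivial_of_diam_ne_zero (by omega)
  have : Nonempty B := hB.nonempty.to_subtype
  have hcard : Fintype.card B = k := by
    rw [← hk, ← hBk, ← Nat.card_coe_set_eq, Nat.card_eq_fintype_card]
  have hcode := card_le_card_of_injOn (s := Finset.univ) (G.centroidalCode B)
    (fun y _ => centroidalCode_mem_initialPatterns hG h3 y)
    (centroidalCode_injective hG h3 hB).injOn
  have hpat := card_initialPatterns_add_le (β := B)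
  rw [Finset.card_univ, hcard] at *
  omega

theorem card_le_of_diam_three {V : Type*} [Fintype V] (G : SimpleGraph V)
    (hG : G.Connected) (hdiam : G.diam = 3) (k : ℕ) (hk : CD G = k) (hk5 : 5 ≤ k) :
    Fintype.card V ≤ 3 ^ k - 2 ^ (k + 1) + 2 :=
  card_le_of_diam_three_general G hG hdiam k hk
end

section
/- Let C be a locating-dominating set of a graph G such that exactly ℓ vertices of V(G)\C have a unique neighbour in C. Then CD(G) ≤ |C| + ℓ. -/
open SimpleGraph

/-- A locating-dominating set. -/
def LocatingDominating {V : Type*} (G : SimpleGraph V) (C : Set V) : Prop :=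
  (∀ v ∉ C, ∃ c ∈ C, G.Adj v c) ∧
  ∀ u ∉ C, ∀ v ∉ C, u ≠ v → G.neighborSet u ∩ C ≠ G.neighborSet v ∩ C

theorem CD_le_LD_set_add {V : Type*} [Fintype V] (G : SimpleGraph V)
    (hG : G.Connected) (C : Set V) (hC : LocatingDominating G C) (l : ℕ)
    (hl : {v : V | v ∉ C ∧ (G.neighborSet v ∩ C).ncard = 1}.ncard = l) :
    CD G ≤ C.ncard + l := by
  classical
  set L : Set V := {v : V | v ∉ C ∧ (G.neighborSet v ∩ C).ncard = 1} with hLdef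
  -- every vertex outside C ∪ L has two distinct neighbours in C
  have htwo : ∀ v ∉ C ∪ L, ∃ c1 ∈ G.neighborSet v ∩ C, ∃ c2 ∈ G.neighborSet v ∩ C, c1 ≠ c2 := by
    intro v hv
    have hvc : v ∉ C := fun h => hv (Or.inl h)
    have hvl : v ∉ L := fun h => hv (Or.inr h)
    obtain ⟨c, hcC, hadj⟩ := hC.1 v hvc
    have hne : (G.neighborSet v ∩ C).Nonempty := ⟨c, hadj, hcC⟩
    have h1 : (G.neighborSet v ∩ C).ncard ≠ 1 := fun h => hvl ⟨hvc, h⟩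
    have hpos : 0 < (G.neighborSet v ∩ C).ncard :=
      (Set.ncard_pos (Set.toFinite _)).mpr hne
    have hlt : 1 < (G.neighborSet v ∩ C).ncard := by omega
    obtain ⟨c1, c2, hc1, hc2, hcc⟩ := (Set.one_lt_ncard_iff (Set.toFinite _)).mp hlt
    exact ⟨c1, hc1, c2, hc2, hcc⟩
  -- the key asymmetric case
  have main : ∀ x ∈ C ∪ L, ∀ y, y ∉ C ∪ L → x ≠ y →
      ∃ b1 ∈ C ∪ L, ∃ b2 ∈ C ∪ L,
        G.dist y b1 ≤ G.dist y b2 ∧ G.dist x b2 < G.dist x b1 := by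
    intro x hx y hy hxy
    obtain ⟨c1, hc1, c2, hc2, hcc⟩ := htwo y hy
    obtain ⟨c, hc, hcx⟩ : ∃ c ∈ G.neighborSet y ∩ C, c ≠ x := by
      by_cases h : c1 = x
      · exact ⟨c2, hc2, by rw [← h]; exact hcc.symm⟩
      · exact ⟨c1, hc1, h⟩
    refine ⟨c, Or.inl hc.2, x, hx, ?_, ?_⟩
    · have h1 : G.dist y c = 1 := dist_eq_one_iff_adj.mpr hc.1
      have h2 : 0 < G.dist y x := hG.pos_dist_of_ne (Ne.symm hxy)
      omega
    · rw [SimpleGraph.dist_self]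
      exact hG.pos_dist_of_ne (Ne.symm hcx)
  have key : CentroidalLocating G (C ∪ L) := by
    intro x y hxy
    by_cases hx : x ∈ C ∪ L
    · by_cases hy : y ∈ C ∪ L
      · refine ⟨x, hx, y, hy, Or.inl ⟨?_, ?_⟩⟩
        · rw [SimpleGraph.dist_self]; exact Nat.zero_le _
        · rw [SimpleGraph.dist_self]; exact hG.pos_dist_of_ne (Ne.symm hxy)
      · obtain ⟨b1, hb1, b2, hb2, h⟩ := main x hx y hy hxy
        exact ⟨b1, hb1, b2, hb2, Or.inr h⟩
    · by_cases hy : y ∈ C ∪ L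
      · obtain ⟨b1, hb1, b2, hb2, h⟩ := main y hy x hx (Ne.symm hxy)
        exact ⟨b1, hb1, b2, hb2, Or.inl h⟩
      · -- both outside: codes differ
        have hxc : x ∉ C := fun h => hx (Or.inl h)
        have hyc : y ∉ C := fun h => hy (Or.inl h)
        have hne := hC.2 x hxc y hyc hxy
        have : ¬∀ c, c ∈ G.neighborSet x ∩ C ↔ c ∈ G.neighborSet y ∩ C :=
          fun h => hne (Set.ext h)
        push_neg at this
        obtain ⟨c, hcnot⟩ := this
        obtain ⟨cx, hcx, _, _, _⟩ := htwo x hx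
        obtain ⟨cy, hcy, _, _, _⟩ := htwo y hy
        rcases hcnot with ⟨hcX, hcY⟩ | ⟨hcX, hcY⟩
        · -- c ∈ N(x)∩C, c ∉ N(y)∩C
          have hcC : c ∈ C := hcX.2
          have hd1 : G.dist x c = 1 := dist_eq_one_iff_adj.mpr hcX.1
          have hdy0 : 0 < G.dist y c := hG.pos_dist_of_ne (fun h => hyc (h ▸ hcC))
          have hdy1 : G.dist y c ≠ 1 := fun h =>
            hcY ⟨dist_eq_one_iff_adj.mp h, hcC⟩
          have hdy2 : G.dist y cy = 1 := dist_eq_one_iff_adj.mpr hcy.1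
          have hdx2 : 0 < G.dist x cy := hG.pos_dist_of_ne (fun h => hxc (h ▸ hcy.2))
          exact ⟨c, Or.inl hcC, cy, Or.inl hcy.2, Or.inl ⟨by omega, by omega⟩⟩
        · -- c ∈ N(y)∩C, c ∉ N(x)∩C
          have hcC : c ∈ C := hcY.2
          have hd1 : G.dist y c = 1 := dist_eq_one_iff_adj.mpr hcY.1
          have hdx0 : 0 < G.dist x c := hG.pos_dist_of_ne (fun h => hxc (h ▸ hcC))
          have hdx1 : G.dist x c ≠ 1 := fun h =>
            hcX ⟨dist_eq_one_iff_adj.mp h, hcC⟩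
          have hdy2 : G.dist x cx = 1 := dist_eq_one_iff_adj.mpr hcx.1
          have hdx2 : 0 < G.dist y cx := hG.pos_dist_of_ne (fun h => hyc (h ▸ hcx.2))
          exact ⟨c, Or.inl hcC, cx, Or.inl hcx.2, Or.inr ⟨by omega, by omega⟩⟩
  have hdisj : Disjoint C L := Set.disjoint_left.mpr (fun a haC haL => haL.1 haC)
  have hcard : (C ∪ L).ncard = C.ncard + l := by
    rw [Set.ncard_union_eq hdisj (Set.toFinite _) (Set.toFinite _), hl]
  exact hcard ▸ Nat.sInf_le ⟨C ∪ L, rfl, key⟩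
end

section
/- For any finite connected graph G, CD(G) ≤ 2·LD(G), where LD(G) is the location-domination number of G. -/
open SimpleGraph

/-- The location-domination number. -/
noncomputable def LD {V : Type*} (G : SimpleGraph V) : ℕ :=
  sInf {k | ∃ C : Set V, C.ncard = k ∧ LocatingDominating G C}

/-- From a locating-dominating set of size `k` one can build a centroidal locating set of
size at most `2k`. -/
lemma exists_centroidal_of_LD {V : Type*} [Fintype V] (G : SimpleGraph V)
    (hG : G.Connected) (C : Set V) (hC : LocatingDominating G C) :
    ∃ B : Set V, B.ncard ≤ 2 * C.ncard ∧ CentroidalLocating G B := by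
  classical
  -- for each c ∈ C, pick the vertex outside C whose code is exactly {c}, if any
  let f : V → V := fun c =>
    if h : ∃ w, w ∉ C ∧ G.neighborSet w ∩ C = {c} then h.choose else c
  refine ⟨C ∪ f '' C, ?_, ?_⟩
  · calc (C ∪ f '' C).ncard ≤ C.ncard + (f '' C).ncard := Set.ncard_union_le _ _
      _ ≤ C.ncard + C.ncard := by
          exact Nat.add_le_add_left (Set.ncard_image_le (Set.toFinite C)) _
      _ = 2 * C.ncard := by ring
  -- basic distance facts
  have hpos : ∀ u v : V, u ≠ v → 0 < G.dist u v := fun u v h => hG.pos_dist_of_ne h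
  have hone : ∀ u v : V, G.Adj u v → G.dist u v = 1 := fun u v h =>
    SimpleGraph.dist_eq_one_iff_adj.mpr h
  have htwo : ∀ u v : V, u ≠ v → ¬ G.Adj u v → 2 ≤ G.dist u v := by
    intro u v hne hadj
    have h0 := hpos u v hne
    have h1 : G.dist u v ≠ 1 := fun h => hadj (SimpleGraph.dist_eq_one_iff_adj.mp h)
    omega
  intro x y hxy
  -- the trivial pair when both vertices lie in B
  have goodB : ∀ u v : V, u ∈ C ∪ f '' C → v ∈ C ∪ f '' C → u ≠ v →
      ∃ b1 ∈ C ∪ f '' C, ∃ b2 ∈ C ∪ f '' C,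
        G.dist u b1 ≤ G.dist u b2 ∧ G.dist v b2 < G.dist v b1 := by
    intro u v hu hv huv
    refine ⟨u, hu, v, hv, ?_, ?_⟩
    · rw [SimpleGraph.dist_self]; exact Nat.zero_le _
    · rw [SimpleGraph.dist_self]; exact hpos v u (Ne.symm huv)
  -- two vertices outside C with a code-separating element
  have goodOut : ∀ u v c : V, u ∉ C → v ∉ C →
      c ∈ G.neighborSet u ∩ C → c ∉ G.neighborSet v ∩ C →
      ∃ b1 ∈ C ∪ f '' C, ∃ b2 ∈ C ∪ f '' C,
        G.dist u b1 ≤ G.dist u b2 ∧ G.dist v b2 < G.dist v b1 := by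
    intro u v c hu hv hcu hcv
    obtain ⟨hadjc, hcC⟩ := hcu
    obtain ⟨c', hc'C, hadjc'⟩ := hC.1 v hv
    refine ⟨c, Or.inl hcC, c', Or.inl hc'C, ?_, ?_⟩
    · rw [hone u c hadjc]
      exact hpos u c' (fun h => hu (h ▸ hc'C))
    · rw [hone v c' hadjc']
      have hvc : v ≠ c := fun h => hv (h ▸ hcC)
      have hnadj : ¬ G.Adj v c := fun h => hcv ⟨h, hcC⟩
      exact lt_of_lt_of_le one_lt_two (htwo v c hvc hnadj)
  -- mixed case: u ∈ C, v ∉ C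
  have hmix : ∀ u v : V, u ∈ C → v ∉ C →
      ∃ b1 ∈ C ∪ f '' C, ∃ b2 ∈ C ∪ f '' C,
        (G.dist u b1 ≤ G.dist u b2 ∧ G.dist v b2 < G.dist v b1) ∨
        (G.dist v b1 ≤ G.dist v b2 ∧ G.dist u b2 < G.dist u b1) := by
    intro u v huC hvC
    have huv : u ≠ v := fun h => hvC (h ▸ huC)
    by_cases hadj : G.Adj v u
    · by_cases hc' : ∃ c' ∈ G.neighborSet v ∩ C, c' ≠ u
      · -- another element in the code of v
        obtain ⟨c', ⟨ha', hc'C⟩, hc'u⟩ := hc'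
        refine ⟨c', Or.inl hc'C, u, Or.inl huC, Or.inr ⟨?_, ?_⟩⟩
        · rw [hone v c' ha']
          exact hpos v u (Ne.symm huv)
        · rw [SimpleGraph.dist_self]
          exact hpos u c' (Ne.symm hc'u)
      · -- the code of v is exactly {u}, hence v = f u ∈ B
        push_neg at hc'
        have hcode : G.neighborSet v ∩ C = {u} := by
          ext z
          constructor
          · intro hz; exact hc' z hz
          · intro hz
            rw [Set.mem_singleton_iff] at hz
            subst hz
            exact ⟨hadj, huC⟩
        have hex : ∃ w, w ∉ C ∧ G.neighborSet w ∩ C = {u} := ⟨v, hvC, hcode⟩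
        have hfu : f u = hex.choose := dif_pos hex
        obtain ⟨hwC, hwcode⟩ := hex.choose_spec
        have hw : hex.choose = v := by
          by_contra hne
          exact hC.2 _ hwC v hvC hne (hwcode.trans hcode.symm)
        have hvB : v ∈ C ∪ f '' C := Or.inr ⟨u, huC, hfu.trans hw⟩
        obtain ⟨b1, hb1, b2, hb2, h⟩ := goodB u v (Or.inl huC) hvB huv
        exact ⟨b1, hb1, b2, hb2, Or.inl h⟩
    · -- v is not adjacent to u, so dist v u ≥ 2
      obtain ⟨c, hcC, hvadj⟩ := hC.1 v hvC
      refine ⟨u, Or.inl huC, c, Or.inl hcC, Or.inl ⟨?_, ?_⟩⟩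
      · rw [SimpleGraph.dist_self]; exact Nat.zero_le _
      · rw [hone v c hvadj]
        exact lt_of_lt_of_le one_lt_two (htwo v u (Ne.symm huv) hadj)
  by_cases hxC : x ∈ C <;> by_cases hyC : y ∈ C
  · obtain ⟨b1, hb1, b2, hb2, h⟩ := goodB x y (Or.inl hxC) (Or.inl hyC) hxy
    exact ⟨b1, hb1, b2, hb2, Or.inl h⟩
  · exact hmix x y hxC hyC
  · obtain ⟨b1, hb1, b2, hb2, h | h⟩ := hmix y x hyC hxC
    · exact ⟨b1, hb1, b2, hb2, Or.inr h⟩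
    · exact ⟨b1, hb1, b2, hb2, Or.inl h⟩
  · -- both outside C: codes differ
    have hne := hC.2 x hxC y hyC hxy
    obtain ⟨c, hc⟩ := Set.symmDiff_nonempty.mpr hne
    rw [Set.mem_symmDiff] at hc
    rcases hc with ⟨hc1, hc2⟩ | ⟨hc1, hc2⟩
    · obtain ⟨b1, hb1, b2, hb2, h⟩ := goodOut x y c hxC hyC hc1 hc2
      exact ⟨b1, hb1, b2, hb2, Or.inl h⟩
    · obtain ⟨b1, hb1, b2, hb2, h⟩ := goodOut y x c hyC hxC hc1 hc2
      exact ⟨b1, hb1, b2, hb2, Or.inr h⟩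

theorem CD_le_two_mul_LD {V : Type*} [Fintype V] (G : SimpleGraph V)
    (hG : G.Connected) : CD G ≤ 2 * LD G := by
  classical
  have hVLD : LocatingDominating G (Set.univ : Set V) := by
    constructor
    · intro v hv; exact absurd (Set.mem_univ v) hv
    · intro u hu; exact absurd (Set.mem_univ u) hu
  have hne : {k | ∃ C : Set V, C.ncard = k ∧ LocatingDominating G C}.Nonempty :=
    ⟨(Set.univ : Set V).ncard, Set.univ, rfl, hVLD⟩
  obtain ⟨C, hCcard, hCLD⟩ := Nat.sInf_mem hne
  obtain ⟨B, hBcard, hBcl⟩ := exists_centroidal_of_LD G hG C hCLD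
  have h1 : CD G ≤ B.ncard := Nat.sInf_le ⟨B, rfl, hBcl⟩
  calc CD G ≤ B.ncard := h1
    _ ≤ 2 * C.ncard := hBcard
    _ = 2 * LD G := by rw [hCcard]; rfl
end

section
/- Let G be a finite connected graph of diameter 2. Then LD(G) − 1 ≤ MD(G), i.e., every resolving set L of G can be extended to a locating-dominating set of size at most |L| + 1. -/
open SimpleGraph

/-- A resolving (locating) set. -/
def Resolving {V : Type*} (G : SimpleGraph V) (L : Set V) : Prop :=
  ∀ ⦃x y : V⦄, x ≠ y → ∃ w ∈ L, G.dist x w ≠ G.dist y w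

/-- The metric dimension. -/
noncomputable def MD {V : Type*} (G : SimpleGraph V) : ℕ :=
  sInf {k | ∃ L : Set V, L.ncard = k ∧ Resolving G L}

theorem LD_sub_one_le_MD_of_diam_two {V : Type*} [Fintype V] (G : SimpleGraph V)
    (hG : G.Connected) (hdiam : G.diam = 2) :
    LD G - 1 ≤ MD G ∧
    ∀ L : Set V, Resolving G L →
      ∃ C : Set V, L ⊆ C ∧ LocatingDominating G C ∧ C.ncard ≤ L.ncard + 1 := by
  classical
  -- distance facts
  have hle2 : ∀ x y : V, G.dist x y ≤ 2 := by
    intro x y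
    rw [← hdiam]
    exact dist_le_diam (ediam_ne_top_of_diam_ne_zero (by omega))
  have hdist : ∀ x y : V, x ≠ y → G.dist x y = if G.Adj x y then 1 else 2 := by
    intro x y hxy
    split_ifs with h
    · exact dist_eq_one_iff_adj.mpr h
    · have h0 : G.dist x y ≠ 0 := fun hc => hxy (hG.dist_eq_zero_iff.mp hc)
      have h1 : G.dist x y ≠ 1 := fun hc => h (dist_eq_one_iff_adj.mp hc)
      have := hle2 x y
      omega
  -- main construction
  have key : ∀ L : Set V, Resolving G L →
      ∃ C : Set V, L ⊆ C ∧ LocatingDominating G C ∧ C.ncard ≤ L.ncard + 1 := by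
    intro L hL
    -- location from resolving, for vertices outside L
    have hloc : ∀ u ∉ L, ∀ v ∉ L, u ≠ v → ∃ w ∈ L, G.Adj u w ≠ G.Adj v w := by
      intro u hu v hv huv
      obtain ⟨w, hwL, hwd⟩ := hL huv
      refine ⟨w, hwL, fun hadj => hwd ?_⟩
      have hu' : u ≠ w := fun h => hu (h ▸ hwL)
      have hv' : v ≠ w := fun h => hv (h ▸ hwL)
      rw [hdist u w hu', hdist v w hv', hadj]
    have hloc' : ∀ C : Set V, L ⊆ C →
        ∀ u ∉ C, ∀ v ∉ C, u ≠ v → G.neighborSet u ∩ C ≠ G.neighborSet v ∩ C := by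
      intro C hLC u hu v hv huv heq
      obtain ⟨w, hwL, hadj⟩ := hloc u (fun h => hu (hLC h)) v (fun h => hv (hLC h)) huv
      apply hadj
      have : w ∈ G.neighborSet u ∩ C ↔ w ∈ G.neighborSet v ∩ C := by rw [heq]
      simp only [Set.mem_inter_iff, mem_neighborSet] at this
      rw [eq_iff_iff]
      constructor
      · intro h; exact (this.mp ⟨h, hLC hwL⟩).1
      · intro h; exact (this.mpr ⟨h, hLC hwL⟩).1
    by_cases hb : ∃ x, x ∉ L ∧ ∀ w ∈ L, ¬ G.Adj x w
    · obtain ⟨x₀, hx₀L, hx₀⟩ := hb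
      have huniq : ∀ y, y ∉ L → (∀ w ∈ L, ¬ G.Adj y w) → y = x₀ := by
        intro y hyL hy
        by_contra hne
        obtain ⟨w, hwL, hwd⟩ := hL hne
        apply hwd
        have hy' : y ≠ w := fun h => hyL (h ▸ hwL)
        have hx' : x₀ ≠ w := fun h => hx₀L (h ▸ hwL)
        rw [hdist y w hy', hdist x₀ w hx', if_neg (hy w hwL), if_neg (hx₀ w hwL)]
      refine ⟨L ∪ {x₀}, Set.subset_union_left, ⟨?_, hloc' _ Set.subset_union_left⟩, ?_⟩
      · intro v hv
        simp only [Set.mem_union, Set.mem_singleton_iff, not_or] at hv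
        have : ¬ ∀ w ∈ L, ¬ G.Adj v w := fun h => hv.2 (huniq v hv.1 h)
        push_neg at this
        obtain ⟨w, hwL, hadj⟩ := this
        exact ⟨w, Or.inl hwL, hadj⟩
      · calc (L ∪ {x₀}).ncard ≤ L.ncard + ({x₀} : Set V).ncard :=
              Set.ncard_union_le _ _
          _ = L.ncard + 1 := by rw [Set.ncard_singleton]
    · push_neg at hb
      refine ⟨L, subset_rfl, ⟨?_, hloc' _ subset_rfl⟩, by omega⟩
      intro v hv
      obtain ⟨w, hwL, hadj⟩ := hb v hv
      exact ⟨w, hwL, hadj⟩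
  refine ⟨?_, key⟩
  -- univ is resolving
  have huniv : Resolving G (Set.univ : Set V) := by
    intro x y hxy
    refine ⟨x, Set.mem_univ x, ?_⟩
    rw [SimpleGraph.dist_self, hdist y x (Ne.symm hxy)]
    split_ifs <;> omega
  have hne : {k | ∃ L : Set V, L.ncard = k ∧ Resolving G L}.Nonempty :=
    ⟨(Set.univ : Set V).ncard, Set.univ, rfl, huniv⟩
  obtain ⟨L, hLcard, hLres⟩ := Nat.sInf_mem hne
  obtain ⟨C, _, hCld, hCcard⟩ := key L hLres
  have hLD : LD G ≤ C.ncard := Nat.sInf_le ⟨C, rfl, hCld⟩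
  have : LD G ≤ MD G + 1 := by
    unfold MD
    omega
  omega
end

section
/- For every n ≥ 4 there exists a graph G of diameter 2 on n' = 2^k + k − 1 vertices with centroidal dimension exactly k, for each k ≥ 4. Concretely, the graph with vertex set B ∪ S where |B| = k, B induces a graph in which every vertex has both a neighbour and a non-neighbour in B, S is a clique of size 2^k − 1, and the vertices of S have pairwise distinct nonempty neighbourhoods in B, has diameter 2 and admits B as a centroidal locating set. -/
open SimpleGraph

/-!
In a graph of diameter at most `2`, a vertex `x ∉ B` is at distance `1` or `2` from `b ∈ B`
according to whether `x ~ b`, so a centroidal locating set `B` gives the vertices outside it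
pairwise distinct neighbourhoods in `B`. Hence `|V| ≤ 2^|B| + |B|`, and a locating set of size `k`
in such a graph on `2^k + k - 1` vertices is minimum. For the construction, add to a graph `H` on
`B` a clique on the nonempty subsets of `B`, each joined to its members: the subset `B` itself is
adjacent to every other vertex, so the diameter is `2`, and `B` is locating as soon as every
vertex of `H` has a neighbour and a non-neighbour.
-/

open Finset

namespace SimpleGraph

variable {V : Type*} {G : SimpleGraph V} {u v : V}

lemma two_le_edist (hne : u ≠ v) (hadj : ¬G.Adj u v) : 2 ≤ G.edist u v := by
  have hlt : 1 < G.edist u v := by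
    rw [← not_le, edist_le_one_iff_adj_or_eq]
    tauto
  simpa [one_add_one_eq_two] using Order.add_one_le_of_lt hlt

lemma dist_eq_two_of_ediam_le_two (h : G.ediam ≤ 2) (hne : u ≠ v) (hadj : ¬G.Adj u v) :
    G.dist u v = 2 := by
  have : G.edist u v = 2 := le_antisymm (edist_le_ediam.trans h) (two_le_edist hne hadj)
  simp [dist, this]

lemma dist_eq_dist_of_adj_iff (h : G.ediam ≤ 2) {x y b : V} (hx : x ≠ b) (hy : y ≠ b)
    (hadj : G.Adj x b ↔ G.Adj y b) : G.dist x b = G.dist y b := by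
  by_cases hxb : G.Adj x b
  · rw [dist_eq_one_iff_adj.mpr hxb, dist_eq_one_iff_adj.mpr (hadj.mp hxb)]
  · rw [dist_eq_two_of_ediam_le_two h hx hxb, dist_eq_two_of_ediam_le_two h hy (hadj.not.mp hxb)]

lemma ediam_le_two_of_forall_adj (w : V) (hw : ∀ v, w ≠ v → G.Adj w v) : G.ediam ≤ 2 :=
  calc G.ediam ≤ 2 * G.eccent w := ediam_le_two_mul_eccent w
    _ ≤ 2 * 1 := by gcongr; exact (eccent_le_one_iff w).mpr hw
    _ = 2 := mul_one 2

lemma connected_of_ediam_le_two [Nonempty V] (h : G.ediam ≤ 2) : G.Connected :=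
  connected_of_ediam_ne_top (ne_top_of_le_ne_top (by decide) h)

end SimpleGraph

section Centroidal

variable {V : Type*} {G : SimpleGraph V} {B : Set V} {x y : V}

def Separates (G : SimpleGraph V) (b₁ b₂ x y : V) : Prop :=
  G.dist x b₁ ≤ G.dist x b₂ ∧ G.dist y b₂ < G.dist y b₁

lemma SimpleGraph.Connected.separates_self (hc : G.Connected) (hne : x ≠ y) :
    Separates G x y x y := by
  simpa [Separates] using hc.pos_dist_of_ne hne.symm

lemma CentroidalLocating.eq_of_forall_dist_eq (hB : CentroidalLocating G B)
    (h : ∀ b ∈ B, G.dist x b = G.dist y b) : x = y := by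
  by_contra hne
  obtain ⟨b₁, hb₁, b₂, hb₂, hsep⟩ := hB hne
  rw [h b₁ hb₁, h b₂ hb₂] at hsep
  omega

theorem CentroidalLocating.card_le [Finite V] (h : G.ediam ≤ 2) (hB : CentroidalLocating G B) :
    Nat.card V ≤ 2 ^ B.ncard + B.ncard := by
  classical
  cases nonempty_fintype V
  set s := B.toFinset
  have hinj : Set.InjOn (fun x => s.filter (G.Adj x)) ↑sᶜ := by
    intro x hx y hy hxy
    refine hB.eq_of_forall_dist_eq fun b hb => dist_eq_dist_of_adj_iff h ?_ ?_ ?_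
    · rintro rfl; simp_all [s]
    · rintro rfl; simp_all [s]
    · simpa [s, hb] using Finset.ext_iff.mp hxy b
  have hcompl := Finset.card_le_card_of_injOn _
    (fun x _ => Finset.mem_powerset.2 (Finset.filter_subset _ s)) hinj
  rw [Finset.card_powerset] at hcompl
  have hs : B.ncard = #s := Set.ncard_eq_toFinset_card' B
  rw [hs, Nat.card_eq_fintype_card, ← Finset.card_compl_add_card s]
  omega

lemma CD_le_ncard (hB : CentroidalLocating G B) : CD G ≤ B.ncard :=
  Nat.sInf_le ⟨B, rfl, hB⟩

lemma card_le_two_pow_CD_add_CD [Finite V] (h : G.ediam ≤ 2) (hB : CentroidalLocating G B) :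
    Nat.card V ≤ 2 ^ CD G + CD G := by
  obtain ⟨B', hB'card, hB'⟩ : CD G ∈ {k | ∃ B : Set V, B.ncard = k ∧ CentroidalLocating G B} :=
    Nat.sInf_mem ⟨_, B, rfl, hB⟩
  exact hB'card ▸ hB'.card_le h

theorem CD_eq_ncard_of_card_eq [Finite V] (h : G.ediam ≤ 2) (hB : CentroidalLocating G B)
    (hcard : Nat.card V = 2 ^ B.ncard + B.ncard - 1) : CD G = B.ncard := by
  refine le_antisymm (CD_le_ncard hB) (not_lt.mp fun hlt => ?_)
  have hbound := card_le_two_pow_CD_add_CD h hB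
  have hpow : 2 ^ CD G < 2 ^ B.ncard := Nat.pow_lt_pow_right one_lt_two hlt
  omega

end Centroidal

lemma Nat.card_finset_nonempty {α : Type*} [Finite α] :
    Nat.card {A : Finset α // A.Nonempty} = 2 ^ Nat.card α - 1 := by
  classical
  cases nonempty_fintype α
  simp [Finset.nonempty_iff_ne_empty, Nat.card_eq_fintype_card, Fintype.card_subtype_compl]

namespace SimpleGraph

variable {β : Type*} (H : SimpleGraph β)

def withSubsetClique : SimpleGraph (β ⊕ {A : Finset β // A.Nonempty}) where
  Adj
    | .inl i, .inl j => H.Adj i j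
    | .inl i, .inr A => i ∈ A.1
    | .inr A, .inl i => i ∈ A.1
    | .inr A, .inr C => A ≠ C
  symm := by
    constructor
    rintro (i | A) (j | C) h
    · exact h.symm
    · exact h
    · exact h
    · exact Ne.symm h
  loopless := by
    constructor
    rintro (i | A) h
    · exact H.irrefl h
    · exact h rfl

variable {H} {i j : β} {A C : {A : Finset β // A.Nonempty}}

@[simp] lemma withSubsetClique_adj_inl_inl :
    H.withSubsetClique.Adj (.inl i) (.inl j) ↔ H.Adj i j := Iff.rfl

@[simp] lemma withSubsetClique_adj_inl_inr :
    H.withSubsetClique.Adj (.inl i) (.inr A) ↔ i ∈ A.1 := Iff.rfl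

@[simp] lemma withSubsetClique_adj_inr_inl :
    H.withSubsetClique.Adj (.inr A) (.inl i) ↔ i ∈ A.1 := Iff.rfl

@[simp] lemma withSubsetClique_adj_inr_inr :
    H.withSubsetClique.Adj (.inr A) (.inr C) ↔ A ≠ C := Iff.rfl

lemma ncard_range_inl :
    (Set.range (Sum.inl : β → β ⊕ {A : Finset β // A.Nonempty})).ncard = Nat.card β :=
  Set.ncard_range_of_injective Sum.inl_injective

variable [Fintype β]

lemma ediam_withSubsetClique_le [Nonempty β] : H.withSubsetClique.ediam ≤ 2 := by
  refine ediam_le_two_of_forall_adj (.inr ⟨Finset.univ, Finset.univ_nonempty⟩) ?_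
  rintro (i | A) hne
  · simp
  · exact withSubsetClique_adj_inr_inr.mpr fun h => hne (congrArg Sum.inr h)

lemma ediam_withSubsetClique [Nontrivial β] : H.withSubsetClique.ediam = 2 := by
  obtain ⟨i, j, hij⟩ := exists_pair_ne β
  have hfar : 2 ≤ H.withSubsetClique.edist (.inl i) (.inr ⟨{j}, Finset.singleton_nonempty j⟩) :=
    two_le_edist Sum.inl_ne_inr (by simpa using hij)
  exact le_antisymm ediam_withSubsetClique_le (hfar.trans edist_le_ediam)

variable [Nonempty β]

lemma dist_withSubsetClique_inr_inl_of_notMem (hi : i ∉ A.1) :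
    H.withSubsetClique.dist (.inr A) (.inl i) = 2 :=
  dist_eq_two_of_ediam_le_two ediam_withSubsetClique_le Sum.inr_ne_inl hi

lemma dist_withSubsetClique_inl_inl_of_not_adj (hij : i ≠ j) (h : ¬H.Adj i j) :
    H.withSubsetClique.dist (.inl i) (.inl j) = 2 :=
  dist_eq_two_of_ediam_le_two ediam_withSubsetClique_le (by simpa using hij) h

/-- If `A ≠ {i}`, some `j ∈ A \ {i}` is as close to `A` as `i` is; if `A = {i}`, a neighbour and
a non-neighbour of `i` in `H` are both at distance `2` from `A`. -/
lemma exists_separates_inr_inl (hadj : ∀ i, ∃ j, H.Adj i j)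
    (hnadj : ∀ i, ∃ j ≠ i, ¬H.Adj i j) (A : {A : Finset β // A.Nonempty}) (i : β) :
    ∃ b₁ ∈ Set.range Sum.inl, ∃ b₂ ∈ Set.range Sum.inl,
      Separates H.withSubsetClique b₁ b₂ (.inr A) (.inl i) := by
  have hc : H.withSubsetClique.Connected := connected_of_ediam_le_two ediam_withSubsetClique_le
  by_cases hA : ∃ j ∈ A.1, j ≠ i
  · obtain ⟨j, hjA, hji⟩ := hA
    refine ⟨_, ⟨j, rfl⟩, _, ⟨i, rfl⟩, ?_, ?_⟩
    · rw [dist_eq_one_iff_adj.mpr hjA]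
      exact hc.pos_dist_of_ne Sum.inr_ne_inl
    · rw [dist_self]
      exact hc.pos_dist_of_ne (by simpa using hji.symm)
  · have hAi : A.1 = {i} :=
      (Finset.Nonempty.subset_singleton_iff A.2).mp fun j hj => by
        by_contra hji
        exact hA ⟨j, hj, by simpa using hji⟩
    obtain ⟨j₁, hj₁i, hj₁⟩ := hnadj i
    obtain ⟨j₂, hj₂⟩ := hadj i
    have hj₂i : j₂ ≠ i := (H.ne_of_adj hj₂).symm
    refine ⟨_, ⟨j₁, rfl⟩, _, ⟨j₂, rfl⟩, ?_, ?_⟩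
    · rw [dist_withSubsetClique_inr_inl_of_notMem (by simpa [hAi] using hj₁i),
        dist_withSubsetClique_inr_inl_of_notMem (by simpa [hAi] using hj₂i)]
    · rw [dist_eq_one_iff_adj.mpr (withSubsetClique_adj_inl_inl.mpr hj₂),
        dist_withSubsetClique_inl_inl_of_not_adj hj₁i.symm hj₁]
      exact one_lt_two

lemma exists_separates_inr_inr (hiA : i ∈ A.1) (hiC : i ∉ C.1) :
    ∃ b₁ ∈ Set.range Sum.inl, ∃ b₂ ∈ Set.range Sum.inl,
      Separates H.withSubsetClique b₁ b₂ (.inr A) (.inr C) := by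
  obtain ⟨j, hjC⟩ := C.2
  refine ⟨_, ⟨i, rfl⟩, _, ⟨j, rfl⟩, ?_, ?_⟩
  · rw [dist_eq_one_iff_adj.mpr hiA]
    exact (connected_of_ediam_le_two ediam_withSubsetClique_le).pos_dist_of_ne Sum.inr_ne_inl
  · rw [dist_eq_one_iff_adj.mpr hjC, dist_withSubsetClique_inr_inl_of_notMem hiC]
    exact one_lt_two

theorem centroidalLocating_withSubsetClique (hadj : ∀ i, ∃ j, H.Adj i j)
    (hnadj : ∀ i, ∃ j ≠ i, ¬H.Adj i j) :
    CentroidalLocating H.withSubsetClique (Set.range Sum.inl) := by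
  have hc : H.withSubsetClique.Connected := connected_of_ediam_le_two ediam_withSubsetClique_le
  rintro (i | A) (j | C) hne
  · exact ⟨_, ⟨i, rfl⟩, _, ⟨j, rfl⟩, .inl (hc.separates_self hne)⟩
  · obtain ⟨b₁, hb₁, b₂, hb₂, hsep⟩ := exists_separates_inr_inl hadj hnadj C i
    exact ⟨b₁, hb₁, b₂, hb₂, .inr hsep⟩
  · obtain ⟨b₁, hb₁, b₂, hb₂, hsep⟩ := exists_separates_inr_inl hadj hnadj A j
    exact ⟨b₁, hb₁, b₂, hb₂, .inl hsep⟩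
  · have hAC : A.1 ≠ C.1 := fun h => hne (congrArg Sum.inr (Subtype.ext h))
    by_cases h : ∃ i ∈ A.1, i ∉ C.1
    · obtain ⟨i, hiA, hiC⟩ := h
      obtain ⟨b₁, hb₁, b₂, hb₂, hsep⟩ := exists_separates_inr_inr (H := H) hiA hiC
      exact ⟨b₁, hb₁, b₂, hb₂, .inl hsep⟩
    · obtain ⟨i, hiC, hiA⟩ : ∃ i ∈ C.1, i ∉ A.1 := by
        by_contra h'
        push Not at h h'
        exact hAC (Finset.Subset.antisymm h h')
      obtain ⟨b₁, hb₁, b₂, hb₂, hsep⟩ := exists_separates_inr_inr (H := H) hiC hiA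
      exact ⟨b₁, hb₁, b₂, hb₂, .inr hsep⟩

theorem CD_withSubsetClique (hadj : ∀ i, ∃ j, H.Adj i j) (hnadj : ∀ i, ∃ j ≠ i, ¬H.Adj i j) :
    CD H.withSubsetClique = Nat.card β := by
  rw [← ncard_range_inl]
  refine CD_eq_ncard_of_card_eq ediam_withSubsetClique_le
    (centroidalLocating_withSubsetClique hadj hnadj) ?_
  rw [ncard_range_inl, Nat.card_sum, Nat.card_finset_nonempty]
  have := Nat.one_le_two_pow (n := Nat.card β)
  omega

end SimpleGraph

section CompleteBipartite

variable {α γ : Type*}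

lemma completeBipartiteGraph_exists_adj [Nonempty α] [Nonempty γ] (v : α ⊕ γ) :
    ∃ w, (completeBipartiteGraph α γ).Adj v w := by
  rcases v with a | c
  · exact ⟨.inr (Classical.arbitrary γ), by simp⟩
  · exact ⟨.inl (Classical.arbitrary α), by simp⟩

lemma completeBipartiteGraph_exists_ne_not_adj [Nontrivial α] [Nontrivial γ] (v : α ⊕ γ) :
    ∃ w ≠ v, ¬(completeBipartiteGraph α γ).Adj v w := by
  rcases v with a | c
  · obtain ⟨a', ha'⟩ := exists_ne a
    exact ⟨.inl a', by simpa using ha', by simp⟩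
  · obtain ⟨c', hc'⟩ := exists_ne c
    exact ⟨.inr c', by simpa using hc', by simp⟩

end CompleteBipartite

theorem exists_extremal_diam_two (k : ℕ) (hk : 4 ≤ k) :
    ∃ (V : Type) (_ : Fintype V) (G : SimpleGraph V),
      G.Connected ∧ G.diam = 2 ∧ Fintype.card V = 2 ^ k + k - 1 ∧ CD G = k := by
  have : Nontrivial (Fin (k - 2)) := Fin.nontrivial_iff_two_le.mpr (by omega)
  have : Nontrivial (Fin 2 ⊕ Fin (k - 2)) := Sum.inl_injective.nontrivial
  have hcard : Nat.card (Fin 2 ⊕ Fin (k - 2)) = k := by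
    rw [Nat.card_sum, Nat.card_fin, Nat.card_fin]
    omega
  refine ⟨_, inferInstance, (completeBipartiteGraph (Fin 2) (Fin (k - 2))).withSubsetClique,
    connected_of_ediam_le_two ediam_withSubsetClique.le, by simp [diam, ediam_withSubsetClique],
    ?_, ?_⟩
  · rw [← Nat.card_eq_fintype_card, Nat.card_sum, Nat.card_finset_nonempty, hcard]
    have := Nat.one_le_two_pow (n := k)
    omega
  · rw [CD_withSubsetClique completeBipartiteGraph_exists_adj
      completeBipartiteGraph_exists_ne_not_adj, hcard]
end

section
/- For n ≥ 3, the complete graph K_n satisfies CD(K_n) = n − 1. -/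
open SimpleGraph

lemma top_dist_eq {n : ℕ} (u v : Fin n) :
    (⊤ : SimpleGraph (Fin n)).dist u v = if u = v then 0 else 1 := by
  split_ifs with h
  · simp [h]
  · exact (SimpleGraph.dist_eq_one_iff_adj).2 (by simpa using h)

theorem CD_completeGraph (n : ℕ) (hn : 3 ≤ n) :
    CD (⊤ : SimpleGraph (Fin n)) = n - 1 := by
  have hpos : 0 < n := by omega
  haveI : NeZero n := ⟨by omega⟩
  -- membership: complement of {0} works
  have hmem : (n - 1) ∈ {k | ∃ B : Set (Fin n), B.ncard = k ∧
      CentroidalLocating (⊤ : SimpleGraph (Fin n)) B} := by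
    refine ⟨({(0 : Fin n)} : Set (Fin n))ᶜ, ?_, ?_⟩
    · have h := Set.ncard_add_ncard_compl ({(0 : Fin n)} : Set (Fin n))
      simp [Nat.card_eq_fintype_card] at h
      omega
    · intro x y hxy
      have key : ∀ z : Fin n, z ≠ 0 → ∃ b : Fin n, b ≠ 0 ∧ b ≠ z := by
        intro z hz
        have hss : ({0, z} : Finset (Fin n)) ⊂ Finset.univ := by
          rw [Finset.ssubset_univ_iff]
          intro h
          have h2 : ({0, z} : Finset (Fin n)).card ≤ 2 :=
            (Finset.card_insert_le _ _).trans (by simp)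
          rw [h, Finset.card_univ, Fintype.card_fin] at h2
          omega
        obtain ⟨b, -, hb⟩ := Finset.exists_of_ssubset hss
        simp only [Finset.mem_insert, Finset.mem_singleton, not_or] at hb
        exact ⟨b, hb.1, hb.2⟩
      rcases eq_or_ne y 0 with hy | hy
      · -- then x ≠ 0, use second disjunct with b2 = x
        have hx : x ≠ 0 := by rw [hy] at hxy; exact hxy
        obtain ⟨b, hb0, hbx⟩ := key x hx
        refine ⟨b, by simpa using hb0, x, by simpa using hx, Or.inr ?_⟩
        rw [top_dist_eq, top_dist_eq, top_dist_eq, top_dist_eq]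
        have hyb : y ≠ b := by rw [hy]; exact Ne.symm hb0
        simp [hxy, hbx.symm, hyb, hxy.symm]
      · obtain ⟨b, hb0, hby⟩ := key y hy
        refine ⟨b, by simpa using hb0, y, by simpa using hy, Or.inl ?_⟩
        rw [top_dist_eq, top_dist_eq, top_dist_eq, top_dist_eq]
        simp only [hxy, hby.symm, hxy.symm, if_false, eq_self_iff_true, if_true]
        split_ifs <;> omega
  have hlb : ∀ k ∈ {k | ∃ B : Set (Fin n), B.ncard = k ∧
      CentroidalLocating (⊤ : SimpleGraph (Fin n)) B}, n - 1 ≤ k := by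
    rintro k ⟨B, rfl, hB⟩
    by_contra hlt
    push_neg at hlt
    -- Bᶜ has at least 2 elements
    have hBc : 2 ≤ B.ncard + Bᶜ.ncard - B.ncard := by
      have h := Set.ncard_add_ncard_compl B
      simp [Nat.card_eq_fintype_card] at h
      omega
    have h2 : 2 ≤ Bᶜ.ncard := by omega
    obtain ⟨x, y, hx, hy, hxy⟩ := (Set.one_lt_ncard_iff (Set.toFinite _)).mp h2
    obtain ⟨b1, hb1, b2, hb2, hcase⟩ := hB hxy
    rcases hcase with ⟨-, h⟩ | ⟨-, h⟩
    · rw [top_dist_eq, top_dist_eq] at h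
      have : y = b2 := by by_contra hne; simp [hne] at h; split_ifs at h <;> omega
      exact hy (this ▸ hb2)
    · rw [top_dist_eq, top_dist_eq] at h
      have : x = b2 := by by_contra hne; simp [hne] at h; split_ifs at h <;> omega
      exact hx (this ▸ hb2)
  exact le_antisymm (Nat.sInf_le hmem) (le_csInf ⟨_, hmem⟩ hlb)
end

section
/- For n ≥ 3, the star K_{1,n−1} satisfies CD(K_{1,n−1}) = n − 1; specifically, the set of all n − 1 leaves is a centroidal basis. -/
open SimpleGraph

section Aux

variable {n : ℕ} (hn : 3 ≤ n) {G : SimpleGraph (Fin n)}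
  (hG : ∀ x y : Fin n, G.Adj x y ↔ x ≠ y ∧ (x.val = 0 ∨ y.val = 0))

include hn hG

lemma star_dist_center (y : Fin n) (hy : y.val ≠ 0) :
    G.dist ⟨0, by omega⟩ y = 1 := by
  rw [SimpleGraph.dist_eq_one_iff_adj, hG]
  exact ⟨fun h => hy (by rw [← h]), Or.inl rfl⟩

lemma star_dist_center' (y : Fin n) (hy : y.val ≠ 0) :
    G.dist y ⟨0, by omega⟩ = 1 := by
  rw [SimpleGraph.dist_comm]; exact star_dist_center hn hG y hy

lemma star_dist_leaves (x y : Fin n) (hx : x.val ≠ 0) (hy : y.val ≠ 0) (hxy : x ≠ y) :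
    G.dist x y = 2 := by
  set c : Fin n := ⟨0, by omega⟩ with hc
  have h1 : G.Adj x c := by rw [hG]; exact ⟨fun h => hx (by rw [h]), Or.inr rfl⟩
  have h2 : G.Adj c y := by rw [hG]; exact ⟨fun h => hy (by rw [← h]), Or.inl rfl⟩
  have hle : G.dist x y ≤ 2 := by
    have := G.dist_le (SimpleGraph.Walk.cons h1 (SimpleGraph.Walk.cons h2 SimpleGraph.Walk.nil))
    simpa using this
  have h0 : G.dist x y ≠ 0 := fun h => by
    rcases SimpleGraph.dist_eq_zero_iff_eq_or_not_reachable.mp h with h' | h'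
    · exact hxy h'
    · exact h' ⟨SimpleGraph.Walk.cons h1 (SimpleGraph.Walk.cons h2 SimpleGraph.Walk.nil)⟩
  have hne1 : G.dist x y ≠ 1 := fun h => by
    rcases (hG x y).mp (SimpleGraph.dist_eq_one_iff_adj.mp h) with ⟨-, h' | h'⟩
    · exact hx h'
    · exact hy h' 
  omega

lemma star_CL : CentroidalLocating G {v : Fin n | v.val ≠ 0} := by
  intro x y hxy
  by_cases hx : x.val = 0
  · -- x is center, y is a leaf
    have hy : y.val ≠ 0 := fun h => hxy (Fin.val_injective (hx.trans h.symm))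
    -- pick another leaf b1 ≠ y
    obtain ⟨b1, hb1, hb1y⟩ : ∃ b1 : Fin n, b1.val ≠ 0 ∧ b1 ≠ y := by
      rcases eq_or_ne y.val 1 with h | h
      · exact ⟨⟨2, by omega⟩, by simp, fun hh => by simp [← hh] at h⟩
      · exact ⟨⟨1, by omega⟩, by simp, fun hh => h (by rw [← hh])⟩
    refine ⟨b1, hb1, y, hy, Or.inl ?_⟩
    have hxc : x = (⟨0, by omega⟩ : Fin n) := Fin.val_injective hx
    rw [hxc, star_dist_center hn hG b1 hb1, star_dist_center hn hG y hy,
      star_dist_leaves hn hG y b1 hy hb1 (Ne.symm hb1y), SimpleGraph.dist_self]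
    omega
  · by_cases hy : y.val = 0
    · -- y is center, x is a leaf
      obtain ⟨b1, hb1, hb1x⟩ : ∃ b1 : Fin n, b1.val ≠ 0 ∧ b1 ≠ x := by
        rcases eq_or_ne x.val 1 with h | h
        · exact ⟨⟨2, by omega⟩, by simp, fun hh => by simp [← hh] at h⟩
        · exact ⟨⟨1, by omega⟩, by simp, fun hh => h (by rw [← hh])⟩
      refine ⟨b1, hb1, x, hx, Or.inr ?_⟩
      have hyc : y = (⟨0, by omega⟩ : Fin n) := Fin.val_injective hy
      rw [hyc, star_dist_center hn hG b1 hb1, star_dist_center hn hG x hx,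
        star_dist_leaves hn hG x b1 hx hb1 (Ne.symm hb1x), SimpleGraph.dist_self]
      omega
    · -- both leaves
      refine ⟨x, hx, y, hy, Or.inl ?_⟩
      simp only [SimpleGraph.dist_self, star_dist_leaves hn hG x y hx hy hxy,
        star_dist_leaves hn hG y x hy hx (Ne.symm hxy)]
      omega

omit hG in
lemma star_leaves_ncard : ({v : Fin n | v.val ≠ 0} : Set (Fin n)).ncard = n - 1 := by
  have : ({v : Fin n | v.val ≠ 0} : Set (Fin n)) = {(⟨0, by omega⟩ : Fin n)}ᶜ := by
    ext v
    simp only [Set.mem_setOf_eq, Set.mem_compl_iff, Set.mem_singleton_iff]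
    constructor
    · intro h hh; exact h (by rw [hh])
    · intro h hh; exact h (Fin.val_injective hh)
  rw [this]
  have h1 := Set.ncard_add_ncard_compl ({(⟨0, by omega⟩ : Fin n)} : Set (Fin n))
  simp only [Set.ncard_singleton, Set.ncard_univ, Nat.card_eq_fintype_card,
    Fintype.card_fin] at h1
  omega

lemma star_lower (B : Set (Fin n)) (hB : CentroidalLocating G B) : n - 1 ≤ B.ncard := by
  by_contra hlt
  push_neg at hlt
  -- complement of B has at least 2 elements
  have hcard : B.ncard + 2 ≤ n := by
    have := Set.ncard_le_ncard (Set.subset_univ B) (Set.finite_univ)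
    simp only [Set.ncard_univ, Nat.card_eq_fintype_card, Fintype.card_fin] at this
    omega
  have hcompl : 2 ≤ Bᶜ.ncard := by
    have := Set.ncard_add_ncard_compl B
    simp only [Set.ncard_univ, Nat.card_eq_fintype_card, Fintype.card_fin] at this
    omega
  obtain ⟨x, hx, y, hy, hxy⟩ := (Set.one_lt_ncard (s := Bᶜ) (Set.toFinite _)).mp (by omega)
  -- Key: for any b1 b2 ∈ B, distances from x (and from y) satisfy d(x,b1) = d(y,b1) or both are constant
  obtain ⟨b1, hb1, b2, hb2, hcase⟩ := hB hxy
  have hx' : x ∉ B := hx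
  have hy' : y ∉ B := hy
  by_cases hx0 : x.val = 0
  · -- x center, y leaf; center ∉ B, so all b ∈ B are leaves ≠ y
    have hy0 : y.val ≠ 0 := fun h => hxy (Fin.val_injective (hx0.trans h.symm))
    have hdx : ∀ b ∈ B, G.dist x b = 1 := by
      intro b hb
      have hb0 : b.val ≠ 0 := fun h => hx' (by rwa [Fin.val_injective (hx0.trans h.symm)])
      have : x = (⟨0, by omega⟩ : Fin n) := Fin.val_injective hx0
      rw [this]; exact star_dist_center hn hG b hb0
    have hdy : ∀ b ∈ B, G.dist y b = 2 := by
      intro b hb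
      have hb0 : b.val ≠ 0 := fun h => hx' (by rwa [Fin.val_injective (hx0.trans h.symm)])
      exact star_dist_leaves hn hG y b hy0 hb0 (fun h => hy' (h ▸ hb))
    rw [hdx b1 hb1, hdx b2 hb2, hdy b1 hb1, hdy b2 hb2] at hcase
    omega
  · by_cases hy0 : y.val = 0
    · have hdx : ∀ b ∈ B, G.dist x b = 2 := by
        intro b hb
        have hb0 : b.val ≠ 0 := fun h => hy' (by rwa [Fin.val_injective (hy0.trans h.symm)])
        exact star_dist_leaves hn hG x b hx0 hb0 (fun h => hx' (h ▸ hb))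
      have hdy : ∀ b ∈ B, G.dist y b = 1 := by
        intro b hb
        have hb0 : b.val ≠ 0 := fun h => hy' (by rwa [Fin.val_injective (hy0.trans h.symm)])
        have : y = (⟨0, by omega⟩ : Fin n) := Fin.val_injective hy0
        rw [this]; exact star_dist_center hn hG b hb0
      rw [hdx b1 hb1, hdx b2 hb2, hdy b1 hb1, hdy b2 hb2] at hcase
      omega
    · -- both leaves: equal distance profiles
      have key : ∀ b ∈ B, G.dist x b = G.dist y b := by
        intro b hb
        by_cases hb0 : b.val = 0
        · have hb' : b = (⟨0, by omega⟩ : Fin n) := Fin.val_injective hb0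
          rw [hb', star_dist_center' hn hG x hx0, star_dist_center' hn hG y hy0]
        · rw [star_dist_leaves hn hG x b hx0 hb0 (fun h => hx' (h ▸ hb)),
            star_dist_leaves hn hG y b hy0 hb0 (fun h => hy' (h ▸ hb))]
      rw [key b1 hb1, key b2 hb2] at hcase
      omega

end Aux

theorem CD_star (n : ℕ) (hn : 3 ≤ n) (G : SimpleGraph (Fin n))
    (hG : ∀ x y : Fin n, G.Adj x y ↔ x ≠ y ∧ (x.val = 0 ∨ y.val = 0)) :
    CD G = n - 1 ∧ CentroidalLocating G {v : Fin n | v.val ≠ 0} := by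
  have hCL := star_CL hn hG
  refine ⟨le_antisymm ?_ ?_, hCL⟩
  · exact Nat.sInf_le ⟨{v : Fin n | v.val ≠ 0}, star_leaves_ncard hn, hCL⟩
  · exact le_csInf ⟨n - 1, {v : Fin n | v.val ≠ 0}, star_leaves_ncard hn, hCL⟩
      (by rintro k ⟨B, rfl, hB⟩; exact star_lower hn hG B hB)
end

section
/- Let G be a connected graph on n ≥ 3 vertices with CD(G) = n − 1. Then G is isomorphic to one of: the complete graph K_n; the star K_{1,n−1}; the complete bipartite graph K_{2,n−2}; the graph S_n obtained by joining an edge K_2 completely to an independent set of n − 2 vertices; the tree T_n obtained from P_3 by attaching n − 3 leaves to one end; or the graph U_n obtained from K_3 by attaching n − 3 leaves to one of its vertices. -/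
open SimpleGraph

/-- The star `K_{1,n-1}`: vertex 0 adjacent to all others. -/
def starGraph (n : ℕ) : SimpleGraph (Fin n) :=
  SimpleGraph.fromRel (fun x _ => x.val = 0)

/-- The complete bipartite graph `K_{2,n-2}` with parts {0,1} and the rest. -/
def compBipGraph (n : ℕ) : SimpleGraph (Fin n) :=
  SimpleGraph.fromRel (fun x y => x.val < 2 ∧ ¬ y.val < 2)

/-- The graph `S_n`: the edge {0,1} joined completely to an independent set of n-2 vertices. -/
def sGraph (n : ℕ) : SimpleGraph (Fin n) :=
  SimpleGraph.fromRel (fun x _ => x.val < 2)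

/-- The tree `T_n`: path 2-1-0 with n-3 extra leaves attached to vertex 0. -/
def tGraph (n : ℕ) : SimpleGraph (Fin n) :=
  SimpleGraph.fromRel (fun x y => (x.val = 0 ∧ y.val ≠ 2) ∨ (x.val = 1 ∧ y.val = 2))

/-- The graph `U_n`: a triangle on {0,1,2} with n-3 leaves attached to vertex 0. -/
def uGraph (n : ℕ) : SimpleGraph (Fin n) :=
  SimpleGraph.fromRel (fun x y => x.val = 0 ∨ (x.val = 1 ∧ y.val = 2))

/-!
Deleting two vertices `u ≠ v` leaves a set of size `n - 2`, so when `CD G = n - 1` no set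
`V ∖ {u, v}` is centroidal locating. If `u` and `v` each have two neighbours besides each other,
that set separates every pair of vertices unless `u` and `v` are twins (same neighbours outside
`{u, v}`). Hence vertices of degree at least 3 ("hubs") are pairwise twins, a vertex of degree 2
is adjacent to every hub, and non-adjacent vertices of degree at least 2 have equal
neighbourhoods. With two hubs `p, q`, either all vertices are hubs and `G` is complete, or every
other vertex has neighbourhood `{p, q}` (`S_n` or `K_{2,n-2}`). Otherwise some vertex `c` has all
other degrees at most 2: if every degree-2 vertex is adjacent to `c` (a "centre"), `G` is the star,
`T_n` or `U_n`; if not, `G` is the 4-cycle `K_{2,2}`.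
-/

open Finset

namespace SimpleGraph

variable {V : Type*} {G : SimpleGraph V} {u v : V}

def Twins (G : SimpleGraph V) (u v : V) : Prop :=
  ∀ x, x ≠ u → x ≠ v → (G.Adj u x ↔ G.Adj v x)

lemma Connected.one_lt_dist_of_not_adj (hG : G.Connected) (huv : u ≠ v) (h : ¬G.Adj u v) :
    1 < G.dist u v := by
  have := hG.pos_dist_of_ne huv
  have : G.dist u v ≠ 1 := fun h1 => h (dist_eq_one_iff_adj.1 h1)
  omega

lemma Connected.dist_le_dist_of_adj (hG : G.Connected) {b w : V} (hb : G.Adj u b) (hw : u ≠ w) :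
    G.dist u b ≤ G.dist u w := by
  rw [dist_eq_one_iff_adj.2 hb]
  exact hG.pos_dist_of_ne hw

lemma Connected.exists_mem_compl_pair_dist_le (hG : G.Connected)
    (hu : ∀ w, ∃ a, G.Adj u a ∧ a ≠ v ∧ a ≠ w) (hv : ∀ w, ∃ b, G.Adj v b ∧ b ≠ u ∧ b ≠ w)
    {x y : V} (hxy : x ≠ y) : ∃ b ∈ ({u, v} : Set V)ᶜ, b ≠ y ∧ G.dist x b ≤ G.dist x y := by
  by_cases hx : x ∈ ({u, v} : Set V)ᶜ
  · exact ⟨x, hx, hxy, by simp⟩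
  obtain ⟨a, hxa, ha, hay⟩ : ∃ a, G.Adj x a ∧ a ∈ ({u, v} : Set V)ᶜ ∧ a ≠ y := by
    simp only [Set.mem_compl_iff, Set.mem_insert_iff, Set.mem_singleton_iff, not_or,
      not_and_or, not_not] at hx ⊢
    rcases hx with rfl | rfl
    · obtain ⟨a, hxa, hav, hay⟩ := hu y
      exact ⟨a, hxa, ⟨hxa.ne', hav⟩, hay⟩
    · obtain ⟨a, hxa, hau, hay⟩ := hv y
      exact ⟨a, hxa, ⟨hau, hxa.ne'⟩, hay⟩
  exact ⟨a, ha, hay, hG.dist_le_dist_of_adj hxa hxy⟩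

lemma Connected.exists_separating_of_not_twins (hG : G.Connected)
    (hu : ∃ a, G.Adj u a ∧ a ≠ v) (hv : ∃ b, G.Adj v b ∧ b ≠ u) (huv : ¬G.Twins u v) :
    ∃ b₁ ∈ ({u, v} : Set V)ᶜ, ∃ b₂ ∈ ({u, v} : Set V)ᶜ,
      (G.dist u b₁ ≤ G.dist u b₂ ∧ G.dist v b₂ < G.dist v b₁) ∨
      (G.dist v b₁ ≤ G.dist v b₂ ∧ G.dist u b₂ < G.dist u b₁) := by
  obtain ⟨z, hzu, hzv, hz⟩ : ∃ z, z ≠ u ∧ z ≠ v ∧ ¬(G.Adj u z ↔ G.Adj v z) := by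
    simpa [Twins] using huv
  -- `z` is adjacent to exactly one of `u`, `v`; pair it with a neighbour of the other one
  refine ⟨z, by simp [hzu, hzv], ?_⟩
  by_cases huz : G.Adj u z
  · have hvz : ¬G.Adj v z := fun h => hz (iff_of_true huz h)
    obtain ⟨b, hvb, hbu⟩ := hv
    refine ⟨b, by simp [hbu, hvb.ne'], Or.inl ⟨hG.dist_le_dist_of_adj huz hbu.symm, ?_⟩⟩
    rw [dist_eq_one_iff_adj.2 hvb]
    exact hG.one_lt_dist_of_not_adj hzv.symm hvz
  · have hvz : G.Adj v z := by tauto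
    obtain ⟨a, hua, hav⟩ := hu
    refine ⟨a, by simp [hav, hua.ne'], Or.inr ⟨hG.dist_le_dist_of_adj hvz hav.symm, ?_⟩⟩
    rw [dist_eq_one_iff_adj.2 hua]
    exact hG.one_lt_dist_of_not_adj hzu.symm huz

lemma Connected.centroidalLocating_compl_pair (hG : G.Connected)
    (hu : ∀ w, ∃ a, G.Adj u a ∧ a ≠ v ∧ a ≠ w) (hv : ∀ w, ∃ b, G.Adj v b ∧ b ≠ u ∧ b ≠ w)
    (huv : ¬G.Twins u v) : CentroidalLocating G {u, v}ᶜ := by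
  intro x y hxy
  by_cases hy : y ∈ ({u, v} : Set V)ᶜ
  · obtain ⟨b, hb, hby, hle⟩ := hG.exists_mem_compl_pair_dist_le hu hv hxy
    exact ⟨b, hb, y, hy, Or.inl ⟨hle, by simpa using hG.pos_dist_of_ne hby.symm⟩⟩
  by_cases hx : x ∈ ({u, v} : Set V)ᶜ
  · obtain ⟨b, hb, hbx, hle⟩ := hG.exists_mem_compl_pair_dist_le hu hv hxy.symm
    exact ⟨b, hb, x, hx, Or.inr ⟨hle, by simpa using hG.pos_dist_of_ne hbx.symm⟩⟩
  have key := hG.exists_separating_of_not_twins ((hu u).imp fun _ h => ⟨h.1, h.2.1⟩)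
    ((hv v).imp fun _ h => ⟨h.1, h.2.1⟩) huv
  simp only [Set.mem_compl_iff, Set.mem_insert_iff, Set.mem_singleton_iff, not_or,
    not_and_or, not_not] at hx hy
  rcases hx with rfl | rfl <;> rcases hy with rfl | rfl
  · exact absurd rfl hxy
  · exact key
  · simpa only [or_comm] using key
  · exact absurd rfl hxy

lemma adj_of_forall_twins {x : V} (h : ∀ u v, u ≠ v → G.Twins u v) (hux : G.Adj u x)
    (huv : u ≠ v) : G.Adj u v := by
  by_cases hxv : x = v
  · exact hxv ▸ hux
  have hvx : G.Adj v x := (h u v huv x hux.ne' hxv).1 hux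
  exact (h x u hux.ne' v (Ne.symm hxv) huv.symm).1 hvx.symm

lemma Connected.mem_of_forall_adj_mem (hG : G.Connected) {s : Set V}
    (hs : ∀ x ∈ s, ∀ y, G.Adj x y → y ∈ s) {a : V} (ha : a ∈ s) (v : V) : v ∈ s := by
  obtain ⟨w⟩ := hG.preconnected a v
  induction w with
  | nil => exact ha
  | cons hxy _ ih => exact ih (hs _ ha _ hxy)

section Finite

variable [Fintype V] [DecidableRel G.Adj]

lemma Connected.one_le_degree (hG : G.Connected) (hV : 2 ≤ Fintype.card V) (v : V) :
    1 ≤ G.degree v :=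
  have : Nontrivial V := Fintype.one_lt_card_iff_nontrivial.mp hV
  hG.preconnected.degree_pos_of_nontrivial v

lemma Connected.exists_adj (hG : G.Connected) (hV : 2 ≤ Fintype.card V) (v : V) :
    ∃ w, G.Adj v w :=
  (G.degree_pos_iff_exists_adj v).mp (hG.one_le_degree hV v)

lemma neighborFinset_eq_singleton (hu : G.degree u ≤ 1) (huv : G.Adj u v) :
    G.neighborFinset u = {v} :=
  (eq_of_subset_of_card_le (by simpa using huv) (by simpa using hu)).symm

variable [DecidableEq V]

lemma two_le_degree_of_adj {a b : V} (ha : G.Adj u a) (hb : G.Adj u b) (hab : a ≠ b) :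
    2 ≤ G.degree u :=
  card_pair hab ▸ card_le_card (by simp [insert_subset_iff, ha, hb])

lemma three_le_degree_of_adj {a b c : V} (ha : G.Adj u a) (hb : G.Adj u b) (hc : G.Adj u c)
    (hab : a ≠ b) (hac : a ≠ c) (hbc : b ≠ c) : 3 ≤ G.degree u := by
  have h3 : #({a, b, c} : Finset V) = 3 := by
    rw [card_insert_of_notMem (by simp [hab, hac]), card_pair hbc]
  exact h3 ▸ card_le_card (by simp [insert_subset_iff, ha, hb, hc])

lemma neighborFinset_eq_pair {a b : V} (hu : G.degree u ≤ 2) (ha : G.Adj u a) (hb : G.Adj u b)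
    (hab : a ≠ b) : G.neighborFinset u = {a, b} :=
  (eq_of_subset_of_card_le (by simp [insert_subset_iff, ha, hb])
    (by simpa [card_pair hab] using hu)).symm

lemma exists_neighborFinset_eq_pair (hu : G.degree u = 2) (huv : G.Adj u v) :
    ∃ w, w ≠ v ∧ G.neighborFinset u = {v, w} := by
  have hv : v ∈ G.neighborFinset u := by simpa using huv
  have h1 : #((G.neighborFinset u).erase v) = 1 := by
    rw [card_erase_of_mem hv, card_neighborFinset_eq_degree, hu]
  obtain ⟨w, hw⟩ := card_eq_one.mp h1
  refine ⟨w, ?_, ?_⟩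
  · exact ne_of_mem_erase (hw ▸ mem_singleton_self w)
  · rw [← insert_erase hv, hw]

lemma Connected.two_le_degree_of_adj_of_degree_eq_one (hG : G.Connected)
    (hV : 3 ≤ Fintype.card V) {ℓ s : V} (hℓ : G.degree ℓ = 1) (hℓs : G.Adj ℓ s) :
    2 ≤ G.degree s := by
  by_contra hs
  have hNℓ := neighborFinset_eq_singleton hℓ.le hℓs
  have hNs := neighborFinset_eq_singleton (by omega) hℓs.symm
  have hall : ∀ x, x ∈ ({ℓ, s} : Set V) := by
    refine hG.mem_of_forall_adj_mem ?_ (Set.mem_insert ℓ {s})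
    rintro x (rfl | rfl) y hxy
    · simp [← mem_neighborFinset, hNℓ] at hxy; simp [hxy]
    · simp [← mem_neighborFinset, hNs] at hxy; simp [hxy]
  have : Fintype.card V ≤ 2 :=
    (card_le_card (s := univ) (t := {ℓ, s}) fun x _ => by simpa using hall x).trans
      card_le_two
  omega

def TwinCondition (G : SimpleGraph V) [DecidableRel G.Adj] : Prop :=
  ∀ ⦃u v : V⦄, u ≠ v → 2 ≤ #((G.neighborFinset u).erase v) →
    2 ≤ #((G.neighborFinset v).erase u) → G.Twins u v

lemma exists_adj_ne_ne_of_two_le_card_erase (h : 2 ≤ #((G.neighborFinset u).erase v)) (w : V) :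
    ∃ a, G.Adj u a ∧ a ≠ v ∧ a ≠ w := by
  obtain ⟨a, ha, haw⟩ := exists_mem_ne h w
  rw [mem_erase, mem_neighborFinset] at ha
  exact ⟨a, ha.2, ha.1, haw⟩

lemma Connected.twinCondition_of_CD_eq (hG : G.Connected) (hCD : CD G = Fintype.card V - 1) :
    G.TwinCondition := by
  intro u v huv hu hv
  by_contra hnt
  have hB := hG.centroidalLocating_compl_pair (exists_adj_ne_ne_of_two_le_card_erase hu)
    (exists_adj_ne_ne_of_two_le_card_erase hv) hnt
  have hle : CD G ≤ ({u, v} : Set V)ᶜ.ncard := Nat.sInf_le ⟨_, rfl, hB⟩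
  rw [Set.ncard_compl, Set.ncard_pair huv, Nat.card_eq_fintype_card] at hle
  have h2 : 1 < Fintype.card V := Fintype.one_lt_card_iff.mpr ⟨u, v, huv⟩
  omega

lemma two_le_card_erase_of_three_le_degree (hu : 3 ≤ G.degree u) (v : V) :
    2 ≤ #((G.neighborFinset u).erase v) := by
  have := pred_card_le_card_erase (s := G.neighborFinset u) (a := v)
  rw [card_neighborFinset_eq_degree] at this
  omega

lemma card_erase_neighborFinset_of_not_adj (h : ¬G.Adj u v) :
    #((G.neighborFinset u).erase v) = G.degree u := by
  rw [erase_eq_of_notMem (by simpa using h), card_neighborFinset_eq_degree]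

namespace TwinCondition

lemma twins_of_three_le_degree (hT : G.TwinCondition) (huv : u ≠ v) (hu : 3 ≤ G.degree u)
    (hv : 3 ≤ G.degree v) : G.Twins u v :=
  hT huv (two_le_card_erase_of_three_le_degree hu v) (two_le_card_erase_of_three_le_degree hv u)

lemma neighborFinset_eq_of_not_adj (hT : G.TwinCondition) (huv : u ≠ v) (h : ¬G.Adj u v)
    (hu : 2 ≤ G.degree u) (hv : 2 ≤ G.degree v) : G.neighborFinset u = G.neighborFinset v := by
  have htw := hT huv (by rwa [card_erase_neighborFinset_of_not_adj h])
    (by rwa [card_erase_neighborFinset_of_not_adj (fun h' => h h'.symm)])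
  ext x
  simp only [mem_neighborFinset]
  by_cases hxu : x = u
  · subst hxu
    simp [G.adj_comm v, h]
  by_cases hxv : x = v
  · subst hxv
    simp [h]
  exact htw x hxu hxv

lemma adj_of_degree_ne (hT : G.TwinCondition) (huv : u ≠ v) (hu : 2 ≤ G.degree u)
    (hv : 2 ≤ G.degree v) (hne : G.degree u ≠ G.degree v) : G.Adj u v := by
  by_contra h
  apply hne
  rw [← card_neighborFinset_eq_degree, ← card_neighborFinset_eq_degree,
    hT.neighborFinset_eq_of_not_adj huv h hu hv]

end TwinCondition

end Finite

section Iso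

variable [Fintype V] {n : ℕ}

lemma exists_equiv_fin_val_eq_iff {k : ℕ} (hcard : Fintype.card V = n) {f : Fin k → V}
    (hf : Function.Injective f) :
    ∃ e : V ≃ Fin n, ∀ (i : Fin k) (a : V), (e a : ℕ) = i ↔ a = f i := by
  have hkn : k ≤ n := by simpa [hcard] using Fintype.card_le_of_injective f hf
  let e₀ := Fintype.equivFinOfCardEq hcard
  obtain ⟨σ, hσ⟩ := Equiv.Perm.exists_extending_pair f (fun i => e₀.symm (Fin.castLE hkn i)) hf
    (e₀.symm.injective.comp (Fin.castLE_injective hkn))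
  refine ⟨σ.trans e₀, fun i a => ?_⟩
  have hfi : (σ.trans e₀) (f i) = Fin.castLE hkn i := by simp [hσ]
  rw [← (σ.trans e₀).injective.eq_iff, hfi, Fin.ext_iff, Fin.val_castLE]

lemma nonempty_iso_top (hcard : Fintype.card V = n) (h : ∀ x y, x ≠ y → G.Adj x y) :
    Nonempty (G ≃g (⊤ : SimpleGraph (Fin n))) := by
  obtain rfl : G = ⊤ := by ext x y; exact ⟨Adj.ne, h x y⟩
  exact ⟨Iso.completeGraph (Fintype.equivFinOfCardEq hcard)⟩

variable [DecidableRel G.Adj]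

lemma nonempty_iso_starGraph (hcard : Fintype.card V = n) {c : V}
    (h : ∀ x, x ≠ c → G.neighborFinset x = {c}) : Nonempty (G ≃g _root_.starGraph n) := by
  obtain ⟨e, he⟩ := exists_equiv_fin_val_eq_iff hcard (f := ![c])
    (Function.injective_of_subsingleton _)
  have h0 : ∀ a, (e a : ℕ) = 0 ↔ a = c := fun a => by simpa using he 0 a
  have hN : ∀ x, x ≠ c → ∀ y, G.Adj x y ↔ y = c := fun x hx y => by
    simpa using Finset.ext_iff.1 (h x hx) y
  refine ⟨⟨e, fun {a b} => ?_⟩⟩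
  rw [_root_.starGraph, fromRel_adj, ne_eq, e.apply_eq_iff_eq, h0, h0]
  grind [G.adj_comm, SimpleGraph.irrefl]

variable [DecidableEq V]

lemma nonempty_iso_sGraph_or_compBipGraph (hcard : Fintype.card V = n) {p q : V} (hpq : p ≠ q)
    (h : ∀ x, x ≠ p → x ≠ q → G.neighborFinset x = {p, q}) :
    Nonempty (G ≃g sGraph n) ∨ Nonempty (G ≃g compBipGraph n) := by
  obtain ⟨e, he⟩ := exists_equiv_fin_val_eq_iff hcard (f := ![p, q])
    (by simp [Function.Injective, Fin.forall_fin_two, hpq, hpq.symm])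
  have h01 : ∀ a, (e a : ℕ) < 2 ↔ a = p ∨ a = q := fun a => by
    have h0 : (e a : ℕ) = 0 ↔ a = p := by simpa using he 0 a
    have h1 : (e a : ℕ) = 1 ↔ a = q := by simpa using he 1 a
    rw [← h0, ← h1]
    omega
  have hN : ∀ x, x ≠ p → x ≠ q → ∀ y, G.Adj x y ↔ y = p ∨ y = q := fun x hx hx' y => by
    simpa using Finset.ext_iff.1 (h x hx hx') y
  by_cases hadj : G.Adj p q
  · refine Or.inl ⟨⟨e, fun {a b} => ?_⟩⟩
    rw [sGraph, fromRel_adj, ne_eq, e.apply_eq_iff_eq, h01, h01]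
    grind [G.adj_comm, SimpleGraph.irrefl]
  · refine Or.inr ⟨⟨e, fun {a b} => ?_⟩⟩
    rw [compBipGraph, fromRel_adj, ne_eq, e.apply_eq_iff_eq, h01, h01]
    grind [G.adj_comm, SimpleGraph.irrefl]

lemma nonempty_iso_tGraph_or_uGraph (hcard : Fintype.card V = n) {c u z : V} (hcz : c ≠ z)
    (hcu : G.Adj c u) (huz : G.Adj u z)
    (h : ∀ x, x ≠ c → x ≠ u → x ≠ z → G.neighborFinset x = {c}) :
    Nonempty (G ≃g tGraph n) ∨ Nonempty (G ≃g uGraph n) := by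
  obtain ⟨e, he⟩ := exists_equiv_fin_val_eq_iff hcard (f := ![c, u, z])
    (by simp [Function.Injective, Fin.forall_fin_succ, hcu.ne, hcz, huz.ne, hcu.ne', hcz.symm,
      huz.ne'])
  have h0 : ∀ a, (e a : ℕ) = 0 ↔ a = c := fun a => by simpa using he 0 a
  have h1 : ∀ a, (e a : ℕ) = 1 ↔ a = u := fun a => by simpa using he 1 a
  have h2 : ∀ a, (e a : ℕ) = 2 ↔ a = z := fun a => by simpa using he 2 a
  have hN : ∀ x, x ≠ c → x ≠ u → x ≠ z → ∀ y, G.Adj x y ↔ y = c := fun x hx hx' hx'' y => by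
    simpa using Finset.ext_iff.1 (h x hx hx' hx'') y
  by_cases hcz' : G.Adj c z
  · refine Or.inr ⟨⟨e, fun {a b} => ?_⟩⟩
    simp only [uGraph, fromRel_adj, ne_eq, e.apply_eq_iff_eq, h0, h1, h2]
    by_cases ha : a = c ∨ a = u ∨ a = z <;> by_cases hb : b = c ∨ b = u ∨ b = z <;>
      grind [G.adj_comm, SimpleGraph.irrefl]
  · refine Or.inl ⟨⟨e, fun {a b} => ?_⟩⟩
    simp only [tGraph, fromRel_adj, ne_eq, e.apply_eq_iff_eq, h0, h1, h2]
    by_cases ha : a = c ∨ a = u ∨ a = z <;> by_cases hb : b = c ∨ b = u ∨ b = z <;>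
      grind [G.adj_comm, SimpleGraph.irrefl]

end Iso

namespace TwinCondition

variable [Fintype V] [DecidableEq V] [DecidableRel G.Adj] {n : ℕ}

lemma neighborFinset_eq_pair_of_two_hubs (hT : G.TwinCondition) (hG : G.Connected)
    (hV : 3 ≤ Fintype.card V) {p q x : V} (hpq : p ≠ q) (hp : 3 ≤ G.degree p)
    (hq : 3 ≤ G.degree q) (hx : G.degree x ≤ 2) : G.neighborFinset x = {p, q} := by
  have hxp : x ≠ p := by rintro rfl; omega
  have hxq : x ≠ q := by rintro rfl; omega
  have hx2 : 2 ≤ G.degree x := by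
    by_contra hx2
    have hx1 : G.degree x = 1 := by have := hG.one_le_degree (by omega) x; omega
    obtain ⟨s, hxs⟩ := hG.exists_adj (by omega) x
    by_cases hs : 3 ≤ G.degree s
    · -- another hub is a twin of `s`, hence also adjacent to `x`
      obtain ⟨t, ht, hts⟩ : ∃ t, 3 ≤ G.degree t ∧ t ≠ s := by
        by_cases hps : p = s
        · exact ⟨q, hq, fun h => hpq (hps.trans h.symm)⟩
        · exact ⟨p, hp, hps⟩
      have hxt : G.Adj t x :=
        (hT.twins_of_three_le_degree hts.symm hs ht x hxs.ne (by rintro rfl; omega)).1 hxs.symm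
      have := two_le_degree_of_adj hxs hxt.symm hts.symm
      omega
    · have hs2 : G.degree s = 2 := by
        have := hG.two_le_degree_of_adj_of_degree_eq_one hV hx1 hxs
        omega
      have hsp : G.Adj s p :=
        hT.adj_of_degree_ne (by rintro rfl; omega) (by omega) (by omega) (by omega)
      have hsq : G.Adj s q :=
        hT.adj_of_degree_ne (by rintro rfl; omega) (by omega) (by omega) (by omega)
      have := three_le_degree_of_adj hsp hsq hxs.symm hpq hxp.symm hxq.symm
      omega
  exact neighborFinset_eq_pair hx (hT.adj_of_degree_ne hxp hx2 (by omega) (by omega))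
    (hT.adj_of_degree_ne hxq hx2 (by omega) (by omega)) hpq

lemma shape_of_two_hubs (hT : G.TwinCondition) (hG : G.Connected) (hcard : Fintype.card V = n)
    (hn : 3 ≤ n) {p q : V} (hpq : p ≠ q) (hp : 3 ≤ G.degree p) (hq : 3 ≤ G.degree q) :
    Nonempty (G ≃g (⊤ : SimpleGraph (Fin n))) ∨ Nonempty (G ≃g sGraph n) ∨
      Nonempty (G ≃g compBipGraph n) := by
  by_cases hall : ∀ x, 3 ≤ G.degree x
  · refine Or.inl (nonempty_iso_top hcard fun x y hxy => ?_)
    obtain ⟨w, hxw⟩ := hG.exists_adj (by omega) x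
    exact adj_of_forall_twins (fun u v huv => hT.twins_of_three_le_degree huv (hall u) (hall v))
      hxw hxy
  push Not at hall
  obtain ⟨x, hx⟩ := hall
  have hNx : G.neighborFinset x = {p, q} :=
    hT.neighborFinset_eq_pair_of_two_hubs hG (by omega) hpq hp hq (by omega)
  have hx2 : G.degree x = 2 := by rw [← card_neighborFinset_eq_degree, hNx, card_pair hpq]
  refine Or.inr (nonempty_iso_sGraph_or_compBipGraph hcard hpq fun y hyp hyq =>
    hT.neighborFinset_eq_pair_of_two_hubs hG (by omega) hpq hp hq ?_)
  by_contra hy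
  have hxy : G.Adj x y :=
    hT.adj_of_degree_ne (by rintro rfl; omega) (by omega) (by omega) (by omega)
  have : y ∈ G.neighborFinset x := by simpa using hxy
  simp [hNx, hyp, hyq] at this

lemma neighborFinset_eq_singleton_of_centre (hT : G.TwinCondition) (hG : G.Connected)
    (hV : 3 ≤ Fintype.card V) {c u z y : V} (hdeg : ∀ x, x ≠ c → G.degree x ≤ 2)
    (hadj : ∀ x, x ≠ c → G.degree x = 2 → G.Adj c x) (hcz : c ≠ z)
    (hNu : G.neighborFinset u = {c, z}) (hyc : y ≠ c) (hyu : y ≠ u) (hyz : y ≠ z) :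
    G.neighborFinset y = {c} := by
  have huc : G.Adj u c := by simp [← mem_neighborFinset, hNu]
  have huz : G.Adj u z := by simp [← mem_neighborFinset, hNu]
  have hu2 : G.degree u = 2 := by rw [← card_neighborFinset_eq_degree, hNu, card_pair hcz]
  -- `z` already has the neighbours `u` and (once it has degree 2) `c`
  have hzx : ∀ x, x ≠ c → x ≠ u → x ≠ z → ¬G.Adj z x := by
    intro x hxc hxu hxz hzx
    have hz2 := le_antisymm (hdeg z hcz.symm) (two_le_degree_of_adj huz.symm hzx hxu.symm)
    have := three_le_degree_of_adj (hadj z hcz.symm hz2).symm huz.symm hzx huc.ne' hxc.symm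
      hxu.symm
    omega
  have hx2 : ∀ x, x ≠ c → x ≠ u → x ≠ z → G.degree x ≠ 2 := by
    intro x hxc hxu hxz hx2
    have hux : ¬G.Adj u x := by simp [← mem_neighborFinset, hNu, hxc, hxz]
    have hN := hT.neighborFinset_eq_of_not_adj hxu.symm hux (by omega) (by omega)
    have hxz' : G.Adj x z := by simp [← mem_neighborFinset, ← hN, hNu]
    exact hzx x hxc hxu hxz hxz'.symm
  have hy1 : G.degree y = 1 := by
    have := hdeg y hyc
    have := hG.one_le_degree (by omega) y
    have := hx2 y hyc hyu hyz
    omega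
  obtain ⟨s, hys⟩ := hG.exists_adj (by omega) y
  obtain rfl : s = c := by
    by_contra hsc
    have hs2 : G.degree s = 2 :=
      le_antisymm (hdeg s hsc) (hG.two_le_degree_of_adj_of_degree_eq_one hV hy1 hys)
    by_cases hsu : s = u
    · subst hsu
      have hyN : y ∈ G.neighborFinset s := by simpa using hys.symm
      simp [hNu, hyc, hyz] at hyN
    by_cases hsz : s = z
    · exact hzx y hyc hyu hyz (hsz ▸ hys.symm)
    exact hx2 s hsc hsu hsz hs2
  exact neighborFinset_eq_singleton hy1.le hys

lemma shape_of_centre (hT : G.TwinCondition) (hG : G.Connected) (hcard : Fintype.card V = n)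
    (hn : 3 ≤ n) {c : V} (hdeg : ∀ x, x ≠ c → G.degree x ≤ 2)
    (hadj : ∀ x, x ≠ c → G.degree x = 2 → G.Adj c x) :
    Nonempty (G ≃g _root_.starGraph n) ∨ Nonempty (G ≃g tGraph n) ∨
      Nonempty (G ≃g uGraph n) := by
  by_cases hu : ∃ u, u ≠ c ∧ G.degree u = 2
  · obtain ⟨u, huc, hu2⟩ := hu
    obtain ⟨z, hzc, hNu⟩ := exists_neighborFinset_eq_pair hu2 (hadj u huc hu2).symm
    have huz : G.Adj u z := by simp [← mem_neighborFinset, hNu]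
    exact Or.inr (nonempty_iso_tGraph_or_uGraph hcard hzc.symm (hadj u huc hu2) huz
      fun y hyc hyu hyz =>
        hT.neighborFinset_eq_singleton_of_centre hG (by omega) hdeg hadj hzc.symm hNu hyc hyu hyz)
  push Not at hu
  have hleaf : ∀ x, x ≠ c → G.degree x = 1 := fun x hxc => by
    have := hdeg x hxc
    have := hu x hxc
    have := hG.one_le_degree (by omega) x
    omega
  refine Or.inl (nonempty_iso_starGraph hcard (c := c) fun x hxc => ?_)
  obtain ⟨s, hxs⟩ := hG.exists_adj (by omega) x
  obtain rfl : s = c := by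
    by_contra hsc
    have := hG.two_le_degree_of_adj_of_degree_eq_one (by omega) (hleaf x hxc) hxs
    have := hleaf s hsc
    omega
  exact neighborFinset_eq_singleton (hleaf x hxc).le hxs

lemma neighborFinset_eq_pair_of_not_adj (hT : G.TwinCondition) (hG : G.Connected)
    (hdeg : ∀ x, G.degree x ≤ 2) {c x y : V} (hxc : x ≠ c) (hc : G.degree c = 2)
    (hx : G.degree x = 2) (hcx : ¬G.Adj c x) (hyc : y ≠ c) (hyx : y ≠ x) :
    G.neighborFinset y = {c, x} := by
  have hN := hT.neighborFinset_eq_of_not_adj hxc.symm hcx (by omega) (by omega)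
  have hxa : ∀ a, G.Adj c a → G.Adj x a := fun a h => by
    rwa [← mem_neighborFinset, ← hN, mem_neighborFinset]
  have hmid : ∀ a, G.Adj c a → G.neighborFinset a = {c, x} := fun a ha =>
    neighborFinset_eq_pair (hdeg a) ha.symm (hxa a ha).symm hxc.symm
  have hy : y ∈ {w | w = c ∨ w = x ∨ G.Adj c w} := by
    refine hG.mem_of_forall_adj_mem ?_ (Or.inl rfl) y
    rintro w (rfl | rfl | hcw) v hwv
    · exact Or.inr (Or.inr hwv)
    · exact Or.inr (Or.inr (by rwa [← mem_neighborFinset, hN, mem_neighborFinset]))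
    · have : v ∈ G.neighborFinset w := by simpa using hwv
      rw [hmid w hcw, mem_insert, mem_singleton] at this
      tauto
  obtain rfl | rfl | hcy := hy
  · exact absurd rfl hyc
  · exact absurd rfl hyx
  · exact hmid y hcy

lemma shape_of_subsingleton_hubs (hT : G.TwinCondition) (hG : G.Connected)
    (hcard : Fintype.card V = n) (hn : 3 ≤ n)
    (hhub : ∀ p q, 3 ≤ G.degree p → 3 ≤ G.degree q → p = q) :
    Nonempty (G ≃g _root_.starGraph n) ∨ Nonempty (G ≃g tGraph n) ∨ Nonempty (G ≃g uGraph n) ∨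
      Nonempty (G ≃g sGraph n) ∨ Nonempty (G ≃g compBipGraph n) := by
  obtain ⟨c, hc, hdeg⟩ : ∃ c, 2 ≤ G.degree c ∧ ∀ x, x ≠ c → G.degree x ≤ 2 := by
    by_cases hhub' : ∃ c, 3 ≤ G.degree c
    · obtain ⟨c, hc⟩ := hhub'
      exact ⟨c, by omega, fun x hxc => by by_contra hx; exact hxc (hhub x c (by omega) hc)⟩
    push Not at hhub'
    obtain ⟨v⟩ : Nonempty V := Fintype.card_pos_iff.mp (by omega)
    obtain ⟨s, hvs⟩ := hG.exists_adj (by omega) v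
    by_cases hv : 2 ≤ G.degree v
    · exact ⟨v, hv, fun x _ => by have := hhub' x; omega⟩
    · have hv1 : G.degree v = 1 := by have := hG.one_le_degree (by omega) v; omega
      exact ⟨s, hG.two_le_degree_of_adj_of_degree_eq_one (by omega) hv1 hvs,
        fun x _ => by have := hhub' x; omega⟩
  by_cases hcen : ∀ x, x ≠ c → G.degree x = 2 → G.Adj c x
  · have := hT.shape_of_centre hG hcard hn hdeg hcen
    tauto
  push Not at hcen
  obtain ⟨x, hxc, hx2, hcx⟩ := hcen
  have hc2 : G.degree c = 2 := by
    by_contra hc2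
    exact hcx (hT.adj_of_degree_ne hxc.symm hc (by omega) (by omega))
  have hdeg' : ∀ y, G.degree y ≤ 2 := fun y => by
    rcases eq_or_ne y c with rfl | hyc
    · omega
    · exact hdeg y hyc
  exact Or.inr (Or.inr (Or.inr (nonempty_iso_sGraph_or_compBipGraph hcard hxc.symm
    fun y hyc hyx => hT.neighborFinset_eq_pair_of_not_adj hG hdeg' hxc hc2 hx2 hcx hyc hyx)))

end TwinCondition

end SimpleGraph

theorem extremal_characterization {V : Type*} [Fintype V] (G : SimpleGraph V)
    (hG : G.Connected) (n : ℕ) (hn : 3 ≤ n) (hcard : Fintype.card V = n)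
    (hCD : CD G = n - 1) :
    Nonempty (G ≃g (⊤ : SimpleGraph (Fin n))) ∨
    Nonempty (G ≃g _root_.starGraph n) ∨
    Nonempty (G ≃g compBipGraph n) ∨
    Nonempty (G ≃g sGraph n) ∨
    Nonempty (G ≃g tGraph n) ∨
    Nonempty (G ≃g uGraph n) := by
  classical
  have hT : G.TwinCondition := hG.twinCondition_of_CD_eq (hcard ▸ hCD)
  by_cases htwo : ∃ p q, p ≠ q ∧ 3 ≤ G.degree p ∧ 3 ≤ G.degree q
  · obtain ⟨p, q, hpq, hp, hq⟩ := htwo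
    have := hT.shape_of_two_hubs hG hcard hn hpq hp hq
    tauto
  · have := hT.shape_of_subsingleton_hubs hG hcard hn fun p q hp hq => by
      by_contra hpq
      exact htwo ⟨p, q, hpq, hp, hq⟩
    tauto
end

section
/- Every tree T on n ≥ 2 vertices satisfies CD(T) > √(n−1). In particular, the path P_n satisfies CD(P_n) > √(n−1). -/
open SimpleGraph

/-!
Let `B` be a centroidal locating set with `k` elements. For an edge `xy` of the tree, the pair
`{x, y}` is separated by an ordered pair `(b₁, b₂)` of distinct vertices of `B`: one end is
weakly closer to `b₁`, the other strictly closer to `b₂`. Geodesics towards `b₁` stay among the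
vertices weakly closer to `b₁`, and geodesics towards `b₂` among the others, so both vertex
classes induce connected subgraphs; in a tree only one edge can join them. Hence
`n - 1 ≤ k (k - 1) < k²`.
-/

open Finset

namespace SimpleGraph

variable {V : Type*} {G : SimpleGraph V}

lemma Walk.dist_add_dist_le_length {u v w : V} (p : G.Walk u v) (hw : w ∈ p.support) :
    G.dist u w + G.dist w v ≤ p.length := by
  classical
  have htake : G.dist u w ≤ (p.takeUntil w hw).length := dist_le _
  have hdrop : G.dist w v ≤ (p.dropUntil w hw).length := dist_le _
  have hsplit := congrArg Walk.length (p.take_spec hw)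
  rw [Walk.length_append] at hsplit
  omega

lemma Connected.exists_walk_forall_dist_add_le (hG : G.Connected) (z b c : V) :
    ∃ p : G.Walk z b, ∀ u ∈ p.support, G.dist z c + G.dist u b ≤ G.dist u c + G.dist z b := by
  obtain ⟨p, hp⟩ := hG.exists_walk_length_eq_dist z b
  refine ⟨p, fun u hu => ?_⟩
  have hgeod := p.dist_add_dist_le_length hu
  have htri : G.dist z c ≤ G.dist z u + G.dist u c := hG.dist_triangle
  omega

lemma Connected.exists_walk_forall_dist_le (hG : G.Connected) {z b₁ b₂ : V}
    (h : G.dist z b₁ ≤ G.dist z b₂) :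
    ∃ p : G.Walk z b₁, ∀ u ∈ p.support, G.dist u b₁ ≤ G.dist u b₂ := by
  obtain ⟨p, hp⟩ := hG.exists_walk_forall_dist_add_le z b₁ b₂
  exact ⟨p, fun u hu => by have := hp u hu; omega⟩

lemma Connected.exists_walk_forall_dist_lt (hG : G.Connected) {z b₁ b₂ : V}
    (h : G.dist z b₂ < G.dist z b₁) :
    ∃ p : G.Walk z b₂, ∀ u ∈ p.support, G.dist u b₂ < G.dist u b₁ := by
  obtain ⟨p, hp⟩ := hG.exists_walk_forall_dist_add_le z b₂ b₁
  exact ⟨p, fun u hu => by have := hp u hu; omega⟩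

/-- Every edge of a forest is a bridge, so `s(x₁, y₁)` lies on the walk
`x₁ ⇝ x₂ — y₂ ⇝ y₁`; it cannot lie on the part inside `S` nor on the part outside `S`. -/
lemma IsAcyclic.sym2_eq_of_walk_mem_of_walk_notMem (hG : G.IsAcyclic) {S : Set V}
    {x₁ y₁ x₂ y₂ : V} (h₁ : G.Adj x₁ y₁) (h₂ : G.Adj x₂ y₂)
    (p : G.Walk x₁ x₂) (hp : ∀ w ∈ p.support, w ∈ S)
    (q : G.Walk y₂ y₁) (hq : ∀ w ∈ q.support, w ∉ S) :
    s(x₁, y₁) = s(x₂, y₂) := by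
  have hbridge := isAcyclic_iff_forall_adj_isBridge.mp hG h₁
  rw [isBridge_iff_forall_walk_mem_edges] at hbridge
  have hmem := hbridge (p.append (Walk.cons h₂ q))
  simp only [Walk.edges_append, Walk.edges_cons, List.mem_append, List.mem_cons] at hmem
  rcases hmem with hp' | heq | hq'
  · exact absurd (hp _ (p.snd_mem_support_of_mem_edges hp')) (hq _ q.end_mem_support)
  · exact heq
  · exact absurd (hp _ p.start_mem_support) (hq _ (q.fst_mem_support_of_mem_edges hq'))

lemma IsTree.sym2_eq_of_dist_le_of_dist_lt (hG : G.IsTree) {b₁ b₂ x₁ y₁ x₂ y₂ : V}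
    (h₁ : G.Adj x₁ y₁) (h₂ : G.Adj x₂ y₂)
    (hx₁ : G.dist x₁ b₁ ≤ G.dist x₁ b₂) (hy₁ : G.dist y₁ b₂ < G.dist y₁ b₁)
    (hx₂ : G.dist x₂ b₁ ≤ G.dist x₂ b₂) (hy₂ : G.dist y₂ b₂ < G.dist y₂ b₁) :
    s(x₁, y₁) = s(x₂, y₂) := by
  obtain ⟨p₁, hp₁⟩ := hG.connected.exists_walk_forall_dist_le hx₁
  obtain ⟨p₂, hp₂⟩ := hG.connected.exists_walk_forall_dist_le hx₂
  obtain ⟨q₁, hq₁⟩ := hG.connected.exists_walk_forall_dist_lt hy₁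
  obtain ⟨q₂, hq₂⟩ := hG.connected.exists_walk_forall_dist_lt hy₂
  refine hG.isAcyclic.sym2_eq_of_walk_mem_of_walk_notMem (S := {u | G.dist u b₁ ≤ G.dist u b₂})
    h₁ h₂ (p₁.append p₂.reverse) ?_ (q₂.append q₁.reverse) ?_
  · simp only [Walk.mem_support_append_iff, Walk.support_reverse, List.mem_reverse]
    rintro w (hw | hw)
    exacts [hp₁ w hw, hp₂ w hw]
  · simp only [Walk.mem_support_append_iff, Walk.support_reverse, List.mem_reverse]
    rintro w (hw | hw)
    exacts [not_le.mpr (hq₂ w hw), not_le.mpr (hq₁ w hw)]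

theorem IsTree.card_edgeFinset_le_card_offDiag [DecidableEq V] [Fintype G.edgeSet]
    (hG : G.IsTree) {B : Finset V} (hB : CentroidalLocating G B) :
    #G.edgeFinset ≤ #B.offDiag := by
  refine card_le_card_of_forall_subsingleton
    (fun e b => ∃ x y, e = s(x, y) ∧ G.dist x b.1 ≤ G.dist x b.2 ∧ G.dist y b.2 < G.dist y b.1)
    (fun e he => ?_) (fun b _ => ?_)
  · induction e using Sym2.ind with
    | _ u v =>
      obtain ⟨b₁, hb₁, b₂, hb₂, hsep⟩ := hB (G.ne_of_adj (mem_edgeFinset.mp he))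
      have hb : (b₁, b₂) ∈ B.offDiag := by
        refine mem_offDiag.mpr ⟨hb₁, hb₂, fun h => ?_⟩
        obtain rfl : b₁ = b₂ := h
        rcases hsep with h' | h' <;> exact lt_irrefl _ h'.2
      rcases hsep with ⟨hu, hv⟩ | ⟨hv, hu⟩
      · exact ⟨_, hb, u, v, rfl, hu, hv⟩
      · exact ⟨_, hb, v, u, Sym2.eq_swap, hv, hu⟩
  · rintro e₁ ⟨he₁, x₁, y₁, rfl, hx₁, hy₁⟩ e₂ ⟨he₂, x₂, y₂, rfl, hx₂, hy₂⟩
    exact hG.sym2_eq_of_dist_le_of_dist_lt (mem_edgeFinset.mp he₁) (mem_edgeFinset.mp he₂)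
      hx₁ hy₁ hx₂ hy₂

end SimpleGraph

lemma sqrt_lt_of_le_mul_self_sub {m k : ℕ} (hm : 0 < m) (h : m ≤ k * k - k) :
    √(m : ℝ) < k := by
  have hk : 0 < k := Nat.pos_of_ne_zero (by rintro rfl; omega)
  have hlt : m < k * k := by omega
  rw [Real.sqrt_lt' (by exact_mod_cast hk), sq]
  exact_mod_cast hlt

section

variable {V : Type*} {G : SimpleGraph V}

lemma centroidalLocating_univ (hG : G.Connected) : CentroidalLocating G Set.univ :=
  fun x y hxy => ⟨x, trivial, y, trivial,
    Or.inl ⟨by simp, by simpa using hG.pos_dist_of_ne hxy.symm⟩⟩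

lemma exists_finset_card_eq_CD [Finite V] (hG : G.Connected) :
    ∃ B : Finset V, #B = CD G ∧ CentroidalLocating G B := by
  obtain ⟨B, hBcard, hB⟩ := Nat.sInf_mem
    (s := {k | ∃ B : Set V, B.ncard = k ∧ CentroidalLocating G B})
    ⟨_, Set.univ, rfl, centroidalLocating_univ hG⟩
  refine ⟨B.toFinite.toFinset, ?_, by simpa using hB⟩
  rw [← Set.ncard_eq_toFinset_card B, hBcard, CD]

end

theorem sqrt_lt_CD_of_tree {V : Type*} [Fintype V] (G : SimpleGraph V)
    (hG : G.Connected) (hacyclic : G.IsAcyclic) (n : ℕ)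
    (hcard : Fintype.card V = n) (hn : 2 ≤ n) :
    Real.sqrt ((n : ℝ) - 1) < (CD G : ℝ) := by
  classical
  have htree : G.IsTree := ⟨hG, hacyclic⟩
  obtain ⟨B, hBcard, hB⟩ := exists_finset_card_eq_CD hG
  have hedges : #G.edgeFinset + 1 = n := hcard ▸ htree.card_edgeFinset
  have hcount := htree.card_edgeFinset_le_card_offDiag hB
  rw [offDiag_card, hBcard] at hcount
  have hn' : (n : ℝ) - 1 = #G.edgeFinset := by rw [← hedges]; push_cast; ring
  rw [hn']
  exact sqrt_lt_of_le_mul_self_sub (by omega) hcount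
end
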